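/- arXiv:1209.5950 — 8 statements merged into one kernel-verified Lean document; each statement's English description precedes it below -/
import Mathlib

section
/- Let p be a prime and r ≥ 1 an integer, and let χ be a multiplicative character of (ℤ/p^rℤ)^× that is primitive, i.e. χ does not factor through the natural projection (ℤ/p^rℤ)^× → (ℤ/p^{r−1}ℤ)^×. Then | ∑_{a ∈ (ℤ/p^rℤ)^×} χ(a) · e^{2πi ã / p^r} |² = p^r, where ã ∈ ℤ denotes any integer lift of a. -/
open Complex

/-- A multiplicative character `χ` of `(ℤ/p^rℤ)^×` is *primitive* if it does not factor
through the natural projection `(ℤ/p^rℤ)^× → (ℤ/p^{r-1}ℤ)^×`. -/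
def IsPrimitiveCharPow (p r : ℕ) (χ : (ZMod (p ^ r))ˣ →* ℂ) : Prop :=
  ¬ ∃ χ' : (ZMod (p ^ (r - 1)))ˣ →* ℂ,
      ∀ u : (ZMod (p ^ r))ˣ,
        χ u = χ' (ZMod.unitsMap (pow_dvd_pow p (Nat.sub_le r 1)) u)

open Finset ZMod AddChar DirichletCharacter

lemma conj_stdAddChar' {N : ℕ} [NeZero N] (x : ZMod N) :
    (starRingEnd ℂ) (stdAddChar x) = stdAddChar (-x) := by
  rw [ZMod.stdAddChar_apply, ZMod.stdAddChar_apply, AddChar.map_neg_eq_inv,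
    ← Circle.coe_inv_eq_conj]

lemma parseval_zmod' {N : ℕ} [NeZero N] (Φ : ZMod N → ℂ) :
    ∑ k, ‖ZMod.dft Φ k‖ ^ 2 = N * ∑ j, ‖Φ j‖ ^ 2 := by
  have key : ∑ k, (ZMod.dft Φ k * (starRingEnd ℂ) (ZMod.dft Φ k))
      = (N : ℂ) * ∑ j, Φ j * (starRingEnd ℂ) (Φ j) := by
    calc ∑ k, (ZMod.dft Φ k * (starRingEnd ℂ) (ZMod.dft Φ k))
        = ∑ k, ∑ j, ∑ i, stdAddChar (k * (i - j)) * (Φ j * (starRingEnd ℂ) (Φ i)) := by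
          refine Finset.sum_congr rfl fun k _ => ?_
          rw [ZMod.dft_apply, map_sum, Finset.sum_mul_sum]
          refine Finset.sum_congr rfl fun j _ => Finset.sum_congr rfl fun i _ => ?_
          rw [smul_eq_mul, smul_eq_mul, map_mul, conj_stdAddChar', neg_neg]
          rw [show stdAddChar (-(j * k)) * Φ j * (stdAddChar (i * k) * (starRingEnd ℂ) (Φ i))
            = (stdAddChar (-(j * k)) * stdAddChar (i * k)) * (Φ j * (starRingEnd ℂ) (Φ i)) by ring,
            ← AddChar.map_add_eq_mul]
          congr 2
          ring
      _ = ∑ j, ∑ i, (∑ k, stdAddChar (k * (i - j))) * (Φ j * (starRingEnd ℂ) (Φ i)) := by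
          rw [Finset.sum_comm]
          refine Finset.sum_congr rfl fun j _ => ?_
          rw [Finset.sum_comm]
          exact Finset.sum_congr rfl fun i _ => (Finset.sum_mul _ _ _).symm
      _ = (N : ℂ) * ∑ j, Φ j * (starRingEnd ℂ) (Φ j) := by
          rw [Finset.mul_sum]
          refine Finset.sum_congr rfl fun j _ => ?_
          simp only [AddChar.sum_mulShift _ (ZMod.isPrimitive_stdAddChar N), sub_eq_zero,
            ZMod.card, Nat.cast_ite, Nat.cast_zero, ite_mul, zero_mul]
          rw [Finset.sum_ite_eq' Finset.univ j
            (fun i => (N : ℂ) * (Φ j * (starRingEnd ℂ) (Φ i)))]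
          simp
  have cast : ∀ z : ℂ, z * (starRingEnd ℂ) z = ((‖z‖ ^ 2 : ℝ) : ℂ) := by
    intro z
    rw [Complex.mul_conj, Complex.normSq_eq_norm_sq]
  simp only [cast] at key
  exact_mod_cast key

lemma isPrimitive_of_charPow (p : ℕ) [NeZero p] (hp : p.Prime) (r : ℕ) (hr : 1 ≤ r)
    (χ : (ZMod (p ^ r))ˣ →* ℂ) (hχ : IsPrimitiveCharPow p r χ) :
    DirichletCharacter.IsPrimitive
      (MulChar.ofUnitHom χ.toHomUnits : DirichletCharacter ℂ (p ^ r)) := by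
  haveI : NeZero (p ^ r) := ⟨pow_ne_zero r (NeZero.ne p)⟩
  set ψ : DirichletCharacter ℂ (p ^ r) := MulChar.ofUnitHom χ.toHomUnits with hψ
  rw [DirichletCharacter.isPrimitive_def]
  obtain ⟨i, hi, hc⟩ := (Nat.dvd_prime_pow hp).mp (ψ.conductor_dvd_level)
  rcases eq_or_lt_of_le hi with h | h
  · rw [hc, h]
  · exfalso
    apply hχ
    have hdvd : ψ.conductor ∣ p ^ (r - 1) := hc ▸ pow_dvd_pow p (by omega)
    have hft := ψ.factorsThrough_conductor
    set χ₀ := hft.χ₀ with hχ₀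
    have heq : ψ = changeLevel (pow_dvd_pow p (Nat.sub_le r 1))
        (changeLevel hdvd χ₀) := by
      rw [← changeLevel_trans _ hdvd (pow_dvd_pow p (Nat.sub_le r 1))]
      exact hft.eq_changeLevel
    refine ⟨(Units.coeHom ℂ).comp (changeLevel hdvd χ₀).toUnitHom, fun u => ?_⟩
    have h1 : χ u = ψ ↑u := by
      rw [hψ, MulChar.ofUnitHom_coe, MonoidHom.coe_toHomUnits]
    rw [h1]
    simp only [heq]
    rw [← MulChar.coe_toUnitHom, changeLevel_toUnitHom]
    rfl

set_option maxHeartbeats 1000000 in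
theorem stmt3 (p : ℕ) [NeZero p] (hp : p.Prime) (r : ℕ) (hr : 1 ≤ r)
    (χ : (ZMod (p ^ r))ˣ →* ℂ) (hχ : IsPrimitiveCharPow p r χ) :
    ‖∑ a : (ZMod (p ^ r))ˣ, χ a *
        Complex.exp (2 * (Real.pi : ℂ) * Complex.I *
          ((((a : ZMod (p ^ r)).val : ℂ)) / (p : ℂ) ^ r))‖ ^ 2
      = (p : ℝ) ^ r := by
  haveI : NeZero (p ^ r) := ⟨pow_ne_zero r (NeZero.ne p)⟩
  set ψ : DirichletCharacter ℂ (p ^ r) := MulChar.ofUnitHom χ.toHomUnits with hψdef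
  have hprim := isPrimitive_of_charPow p hp r hr χ hχ
  rw [← hψdef] at hprim
  -- sum over units of zero-on-nonunits function equals full sum
  have hsum_units : ∀ f : ZMod (p ^ r) → ℂ, (∀ a, ¬IsUnit a → f a = 0) →
      ∑ a, f a = ∑ u : (ZMod (p ^ r))ˣ, f ↑u := by
    intro f hf
    rw [← Finset.sum_subset (Finset.subset_univ
        ((Finset.univ : Finset (ZMod (p ^ r))ˣ).image (Units.val)))
      (fun x _ hx => hf x (fun hu => hx (Finset.mem_image.mpr
        ⟨hu.unit, Finset.mem_univ _, hu.unit_spec⟩)))]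
    exact Finset.sum_image (fun x _ y _ h => Units.ext h)
  -- the theorem's sum is the Gauss sum
  have hS : ∑ a : (ZMod (p ^ r))ˣ, χ a *
        Complex.exp (2 * (Real.pi : ℂ) * Complex.I *
          ((((a : ZMod (p ^ r)).val : ℂ)) / (p : ℂ) ^ r))
      = gaussSum ψ stdAddChar := by
    rw [gaussSum, hsum_units _ (fun a ha => by rw [ψ.map_nonunit ha, zero_mul])]
    refine Finset.sum_congr rfl fun u _ => ?_
    rw [hψdef, MulChar.ofUnitHom_coe, MonoidHom.coe_toHomUnits,
      ZMod.stdAddChar_apply, ZMod.toCircle_apply]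
    congr 2
    push_cast
    ring
  clear_value ψ
  set T := gaussSum ψ stdAddChar with hT
  rw [hS]
  clear_value T
  -- Parseval
  have hpar := parseval_zmod' (⇑ψ)
  have hft : ∀ k : ZMod (p ^ r), ZMod.dft (⇑ψ) k = ψ⁻¹ (-k) * T :=
    fun k => hT ▸ hprim.fourierTransform_eq_inv_mul_gaussSum k
  set Θ : DirichletCharacter ℂ (p ^ r) := ψ⁻¹ with hΘ
  clear_value Θ
  -- count of units, as a real sum
  set c : ℝ := ∑ a : ZMod (p ^ r), (if IsUnit a then (1:ℝ) else 0) with hcdef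
  have hnorm : ∀ (ψ' : DirichletCharacter ℂ (p ^ r)), ∑ a, ‖ψ' a‖ ^ 2 = c := by
    intro ψ'
    refine Finset.sum_congr rfl fun a _ => ?_
    by_cases h : IsUnit a
    · rw [if_pos h, ← h.unit_spec, ψ'.unit_norm_eq_one h.unit, one_pow]
    · rw [if_neg h, ψ'.map_nonunit h, norm_zero, zero_pow two_ne_zero]
  have hnormΘ : ∀ k : ZMod (p ^ r), ‖Θ (-k)‖ ^ 2 = (if IsUnit k then (1:ℝ) else 0) := by
    intro k
    by_cases h : IsUnit k
    · have h' : IsUnit (-k) := h.neg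
      rw [if_pos h, ← h'.unit_spec, DirichletCharacter.unit_norm_eq_one Θ h'.unit, one_pow]
    · have h' : ¬ IsUnit (-k) := fun hh => h (by simpa using hh.neg)
      rw [if_neg h, Θ.map_nonunit h', norm_zero, zero_pow two_ne_zero]
  have hL : ∑ k, ‖ZMod.dft (⇑ψ) k‖ ^ 2 = c * ‖T‖ ^ 2 := by
    calc ∑ k, ‖ZMod.dft (⇑ψ) k‖ ^ 2
        = ∑ k : ZMod (p ^ r), (if IsUnit k then (1:ℝ) else 0) * ‖T‖ ^ 2 := by
          refine Finset.sum_congr rfl fun k _ => ?_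
          rw [hft k, norm_mul, mul_pow, hnormΘ k]
      _ = c * ‖T‖ ^ 2 := by rw [← Finset.sum_mul, ← hcdef]
  rw [hL, hnorm ψ] at hpar
  have hcpos : 0 < c := by
    rw [hcdef]
    refine Finset.sum_pos' (fun a _ => by positivity) ⟨1, Finset.mem_univ _, by simp⟩
  have hTN : ‖T‖ ^ 2 = ((p ^ r : ℕ) : ℝ) :=
    mul_left_cancel₀ hcpos.ne' (by rw [hpar]; ring)
  rw [hTN]
  push_cast
  ring
end

section
/- Let p be a prime and N ≥ 1 an integer. Let G = GL₂(ℤ/p^Nℤ) and let B ≤ G be the subgroup of invertible upper triangular matrices. Then two elements g, h ∈ G lie in the same (B, B)-double coset (i.e. B g B = B h B) if and only if the lower-left entries g₂₁ and h₂₁ generate the same ideal of ℤ/p^Nℤ. In particular, the (B, B)-double cosets of G are exactly: B itself (lower-left entry zero), the set of g with g₂₁ a unit, and for each 1 ≤ k ≤ N−1 the set of g with g₂₁ = p^k u for a unit u. -/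
/-- The Borel "subgroup" of `GL₂(ℤ/p^Nℤ)`: the set of invertible upper triangular
matrices, i.e. those with vanishing lower-left entry. -/
def BorelSet (R : Type*) [CommRing R] : Set (Matrix.GeneralLinearGroup (Fin 2) R) :=
  {b | (b : Matrix (Fin 2) (Fin 2) R) 1 0 = 0}

/-- The `(B,B)`-double coset of `g` in `GL₂(R)`. -/
def doubleCoset {R : Type*} [CommRing R] (g : Matrix.GeneralLinearGroup (Fin 2) R) :
    Set (Matrix.GeneralLinearGroup (Fin 2) R) :=
  {x | ∃ b₁ ∈ BorelSet R, ∃ b₂ ∈ BorelSet R, x = b₁ * g * b₂}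

namespace Stmt5Aux

variable {R : Type*} [CommRing R]

lemma borel_one : (1 : Matrix.GeneralLinearGroup (Fin 2) R) ∈ BorelSet R := by
  simp [BorelSet, Matrix.one_apply]

lemma borel_mul {a b : Matrix.GeneralLinearGroup (Fin 2) R}
    (ha : a ∈ BorelSet R) (hb : b ∈ BorelSet R) : a * b ∈ BorelSet R := by
  simp only [BorelSet, Set.mem_setOf_eq] at ha hb ⊢
  simp [Matrix.mul_apply, Fin.sum_univ_two, ha, hb]

lemma borel_inv {b : Matrix.GeneralLinearGroup (Fin 2) R}
    (hb : b ∈ BorelSet R) : b⁻¹ ∈ BorelSet R := by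
  simp only [BorelSet, Set.mem_setOf_eq] at hb ⊢
  rw [Matrix.coe_units_inv, Matrix.inv_def, Matrix.adjugate_fin_two]
  simp [hb]

lemma mem_dc_self (g : Matrix.GeneralLinearGroup (Fin 2) R) : g ∈ doubleCoset g :=
  ⟨1, borel_one, 1, borel_one, by simp⟩

lemma dc_eq_of_mem {g h : Matrix.GeneralLinearGroup (Fin 2) R}
    (hm : h ∈ doubleCoset g) : doubleCoset h = doubleCoset g := by
  obtain ⟨b₁, hb₁, b₂, hb₂, rfl⟩ := hm
  ext x
  constructor
  · rintro ⟨c₁, hc₁, c₂, hc₂, rfl⟩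
    exact ⟨c₁ * b₁, borel_mul hc₁ hb₁, b₂ * c₂, borel_mul hb₂ hc₂, by group⟩
  · rintro ⟨c₁, hc₁, c₂, hc₂, rfl⟩
    exact ⟨c₁ * b₁⁻¹, borel_mul hc₁ (borel_inv hb₁), b₂⁻¹ * c₂,
      borel_mul (borel_inv hb₂) hc₂, by group⟩

lemma isUnit_det (b : Matrix.GeneralLinearGroup (Fin 2) R) :
    IsUnit ((b : Matrix (Fin 2) (Fin 2) R).det) :=
  (Matrix.isUnit_iff_isUnit_det _).mp b.isUnit

lemma isUnit_mul_diag {b : Matrix.GeneralLinearGroup (Fin 2) R} (hb : b ∈ BorelSet R) :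
    IsUnit ((b : Matrix (Fin 2) (Fin 2) R) 0 0 * (b : Matrix (Fin 2) (Fin 2) R) 1 1) := by
  have h := isUnit_det b
  rw [Matrix.det_fin_two] at h
  simp only [BorelSet, Set.mem_setOf_eq] at hb
  rwa [hb, mul_zero, sub_zero] at h

lemma isUnit_00 {b : Matrix.GeneralLinearGroup (Fin 2) R} (hb : b ∈ BorelSet R) :
    IsUnit ((b : Matrix (Fin 2) (Fin 2) R) 0 0) :=
  isUnit_of_mul_isUnit_left (isUnit_mul_diag hb)

lemma isUnit_11 {b : Matrix.GeneralLinearGroup (Fin 2) R} (hb : b ∈ BorelSet R) :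
    IsUnit ((b : Matrix (Fin 2) (Fin 2) R) 1 1) :=
  isUnit_of_mul_isUnit_right (isUnit_mul_diag hb)

lemma entry_mul {b₁ b₂ : Matrix.GeneralLinearGroup (Fin 2) R}
    (hb₁ : b₁ ∈ BorelSet R) (hb₂ : b₂ ∈ BorelSet R) (g : Matrix.GeneralLinearGroup (Fin 2) R) :
    ((b₁ * g * b₂ : Matrix.GeneralLinearGroup (Fin 2) R) : Matrix (Fin 2) (Fin 2) R) 1 0
      = ((b₁ : Matrix (Fin 2) (Fin 2) R) 1 1 * (b₂ : Matrix (Fin 2) (Fin 2) R) 0 0)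
        * (g : Matrix (Fin 2) (Fin 2) R) 1 0 := by
  simp only [BorelSet, Set.mem_setOf_eq] at hb₁ hb₂
  simp only [Matrix.GeneralLinearGroup.coe_mul, Matrix.mul_apply, Fin.sum_univ_two, hb₁, hb₂]
  ring

/-- A lower unipotent matrix. -/
def lowerU (c : R) : Matrix (Fin 2) (Fin 2) R := !![1, 0; c, 1]

lemma det_lowerU (c : R) : (lowerU c).det = 1 := by
  simp [lowerU, Matrix.det_fin_two_of]

/-- A lower unipotent matrix as an element of `GL₂`. -/
noncomputable def lowerGL (c : R) : Matrix.GeneralLinearGroup (Fin 2) R :=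
  Matrix.GeneralLinearGroup.mk'' (lowerU c) (by rw [det_lowerU]; exact isUnit_one)

lemma coe_lowerGL (c : R) : (lowerGL c : Matrix (Fin 2) (Fin 2) R) = lowerU c := rfl

/-- An explicit `GL₂` element from a matrix with unit determinant. -/
noncomputable def glMk (A : Matrix (Fin 2) (Fin 2) R) (h : IsUnit A.det) :
    Matrix.GeneralLinearGroup (Fin 2) R :=
  Matrix.GeneralLinearGroup.mk'' A h

lemma coe_glMk (A : Matrix (Fin 2) (Fin 2) R) (h : IsUnit A.det) :
    ((glMk A h : Matrix.GeneralLinearGroup (Fin 2) R) : Matrix (Fin 2) (Fin 2) R) = A := rfl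

lemma mem_dc_lower [IsLocalRing R] (g : Matrix.GeneralLinearGroup (Fin 2) R) :
    g ∈ doubleCoset (lowerGL ((g : Matrix (Fin 2) (Fin 2) R) 1 0)) := by
  set A : Matrix (Fin 2) (Fin 2) R := (g : Matrix (Fin 2) (Fin 2) R) with hA
  set a := A 0 0 with ha'; set b := A 0 1 with hb'
  set c := A 1 0 with hc'; set d := A 1 1 with hd'
  have hAeta : A = !![a, b; c, d] := by rw [Matrix.eta_fin_two A]
  have hdet : IsUnit (a * d - b * c) := by
    have := isUnit_det g
    rwa [← hA, Matrix.det_fin_two] at this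
  by_cases hc : IsUnit c
  · -- c is a unit
    set ci : R := ↑hc.unit⁻¹ with hci
    have hcc : ci * c = 1 := hc.val_inv_mul
    refine ⟨glMk !![a * d - b * c, b - a * ci * (d - 1); 0, 1] ?_, ?_,
      glMk !![1, ci * (d - 1); 0, 1] ?_, ?_, ?_⟩
    · rw [Matrix.det_fin_two_of]
      simp only [mul_one, mul_zero, sub_zero]
      exact hdet
    · show (_ : Matrix (Fin 2) (Fin 2) R) 1 0 = 0
      rw [coe_glMk]; simp
    · rw [Matrix.det_fin_two_of]; simp
    · show (_ : Matrix (Fin 2) (Fin 2) R) 1 0 = 0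
      rw [coe_glMk]; simp
    · apply Units.ext
      show A = _
      rw [Matrix.GeneralLinearGroup.coe_mul, Matrix.GeneralLinearGroup.coe_mul,
        coe_glMk, coe_glMk, coe_lowerGL, lowerU, hAeta, Matrix.mul_fin_two,
        Matrix.mul_fin_two]
      ext i j
      fin_cases i <;> fin_cases j
      · simp only [Matrix.cons_val', Matrix.cons_val_zero, Matrix.empty_val',
          Matrix.cons_val_fin_one, Matrix.cons_val_one, Matrix.head_cons,
          Matrix.head_fin_const, Matrix.of_apply, Fin.zero_eta, Fin.mk_one]
        linear_combination a * (d - 1) * hcc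
      · simp only [Matrix.cons_val', Matrix.cons_val_zero, Matrix.empty_val',
          Matrix.cons_val_fin_one, Matrix.cons_val_one, Matrix.head_cons,
          Matrix.head_fin_const, Matrix.of_apply, Fin.zero_eta, Fin.mk_one]
        linear_combination a * ci * (d - 1) * (d - 1) * hcc
      · simp
      · simp only [Matrix.cons_val', Matrix.cons_val_zero, Matrix.empty_val',
          Matrix.cons_val_fin_one, Matrix.cons_val_one, Matrix.head_cons,
          Matrix.head_fin_const, Matrix.of_apply, Fin.zero_eta, Fin.mk_one]
        linear_combination (1 - d) * hcc
  · -- c is not a unit, so d is a unit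
    have had : IsUnit (a * d) := by
      have h' : IsUnit (a * d + -(b * c)) := by rwa [sub_eq_add_neg] at hdet
      rcases IsLocalRing.isUnit_or_isUnit_of_isUnit_add h' with h | h
      · exact h
      · exact absurd (isUnit_of_mul_isUnit_right ((IsUnit.neg_iff _).mp h)) hc
    have hd : IsUnit d := isUnit_of_mul_isUnit_right had
    set di : R := ↑hd.unit⁻¹ with hdi
    have hdd : di * d = 1 := hd.val_inv_mul
    refine ⟨glMk !![di * (a * d - b * c), b * di; 0, 1] ?_, ?_,
      glMk !![1, 0; 0, d] ?_, ?_, ?_⟩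
    · rw [Matrix.det_fin_two_of]
      simp only [mul_one, mul_zero, sub_zero]
      exact hd.unit⁻¹.isUnit.mul hdet
    · show (_ : Matrix (Fin 2) (Fin 2) R) 1 0 = 0
      rw [coe_glMk]; simp
    · rw [Matrix.det_fin_two_of]
      simp only [one_mul, mul_zero, zero_mul, sub_zero]
      exact hd
    · show (_ : Matrix (Fin 2) (Fin 2) R) 1 0 = 0
      rw [coe_glMk]; simp
    · apply Units.ext
      show A = _
      rw [Matrix.GeneralLinearGroup.coe_mul, Matrix.GeneralLinearGroup.coe_mul,
        coe_glMk, coe_glMk, coe_lowerGL, lowerU, hAeta, Matrix.mul_fin_two,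
        Matrix.mul_fin_two]
      ext i j
      fin_cases i <;> fin_cases j
      · simp only [Matrix.cons_val', Matrix.cons_val_zero, Matrix.empty_val',
          Matrix.cons_val_fin_one, Matrix.cons_val_one, Matrix.head_cons,
          Matrix.head_fin_const, Matrix.of_apply, Fin.zero_eta, Fin.mk_one]
        linear_combination (-a) * hdd
      · simp only [Matrix.cons_val', Matrix.cons_val_zero, Matrix.empty_val',
          Matrix.cons_val_fin_one, Matrix.cons_val_one, Matrix.head_cons,
          Matrix.head_fin_const, Matrix.of_apply, Fin.zero_eta, Fin.mk_one]
        linear_combination (-b) * hdd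
      · simp
      · simp

lemma lower_unit_mem {c u : R} (hu : IsUnit u) :
    lowerGL (u * c) ∈ doubleCoset (lowerGL c) := by
  set ui : R := ↑hu.unit⁻¹ with hui
  have huu : ui * u = 1 := hu.val_inv_mul
  refine ⟨glMk !![ui, 0; 0, 1] ?_, ?_, glMk !![u, 0; 0, 1] ?_, ?_, ?_⟩
  · rw [Matrix.det_fin_two_of]
    simp only [mul_one, mul_zero, zero_mul, sub_zero]
    exact hu.unit⁻¹.isUnit
  · show (_ : Matrix (Fin 2) (Fin 2) R) 1 0 = 0
    rw [coe_glMk]; simp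
  · rw [Matrix.det_fin_two_of]
    simp only [mul_one, mul_zero, zero_mul, sub_zero]
    exact hu
  · show (_ : Matrix (Fin 2) (Fin 2) R) 1 0 = 0
    rw [coe_glMk]; simp
  · apply Units.ext
    show (lowerGL (u * c) : Matrix (Fin 2) (Fin 2) R) = _
    rw [Matrix.GeneralLinearGroup.coe_mul, Matrix.GeneralLinearGroup.coe_mul,
      coe_glMk, coe_glMk, coe_lowerGL, coe_lowerGL, lowerU, lowerU,
      Matrix.mul_fin_two, Matrix.mul_fin_two]
    ext i j
    fin_cases i <;> fin_cases j
    · simp only [Matrix.cons_val', Matrix.cons_val_zero, Matrix.empty_val',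
        Matrix.cons_val_fin_one, Matrix.cons_val_one, Matrix.head_cons,
        Matrix.head_fin_const, Matrix.of_apply, Fin.zero_eta, Fin.mk_one]
      linear_combination -huu
    · simp
    · simp only [Matrix.cons_val', Matrix.cons_val_zero, Matrix.empty_val',
        Matrix.cons_val_fin_one, Matrix.cons_val_one, Matrix.head_cons,
        Matrix.head_fin_const, Matrix.of_apply, Fin.zero_eta, Fin.mk_one]
      ring
    · simp

section ZMod

variable (p N : ℕ)

lemma zmod_nonunit_dvd (hp : p.Prime) (hN : 1 ≤ N) {a : ZMod (p ^ N)}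
    (h : ¬ IsUnit a) : (p : ZMod (p ^ N)) ∣ a := by
  haveI : NeZero (p ^ N) := ⟨pow_ne_zero _ hp.pos.ne'⟩
  have hval : ((a.val : ℕ) : ZMod (p ^ N)) = a := ZMod.natCast_rightInverse a
  have hcop : ¬ Nat.Coprime a.val (p ^ N) := by
    intro hco
    exact h (by rw [← hval]; exact (ZMod.isUnit_iff_coprime _ _).mpr hco)
  have hdvd : p ∣ a.val := by
    by_contra hpd
    exact hcop (Nat.Coprime.pow_right _ ((Nat.Prime.coprime_iff_not_dvd hp).mpr hpd).symm)
  rw [← hval]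
  exact_mod_cast Nat.cast_dvd_cast hdvd

lemma zmod_p_not_unit (hp : p.Prime) (hN : 1 ≤ N) : ¬ IsUnit ((p : ℕ) : ZMod (p ^ N)) := by
  intro h
  have hco : Nat.Coprime p (p ^ N) := (ZMod.isUnit_iff_coprime _ _).mp h
  have hdvd : p ∣ p ^ N := dvd_pow_self p (by omega)
  exact hp.one_lt.ne' (Nat.Coprime.eq_one_of_dvd hco hdvd)

lemma zmod_localRing (hp : p.Prime) (hN : 1 ≤ N) : IsLocalRing (ZMod (p ^ N)) := by
  haveI : Fact (1 < p ^ N) := ⟨Nat.one_lt_pow (by omega) hp.one_lt⟩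
  refine IsLocalRing.of_isUnit_or_isUnit_one_sub_self fun a => ?_
  by_contra hcon
  push_neg at hcon
  obtain ⟨h1, h2⟩ := hcon
  have d1 := zmod_nonunit_dvd p N hp hN h1
  have d2 := zmod_nonunit_dvd p N hp hN h2
  have : ((p : ℕ) : ZMod (p ^ N)) ∣ 1 := by
    have := dvd_add d1 d2
    rwa [add_sub_cancel] at this
  exact zmod_p_not_unit p N hp hN (isUnit_of_dvd_one this)

lemma exists_unit_of_span_eq (hp : p.Prime) (hN : 1 ≤ N) {a b : ZMod (p ^ N)}
    (hs : Ideal.span {a} = Ideal.span {b}) :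
    ∃ u : ZMod (p ^ N), IsUnit u ∧ a = u * b := by
  haveI := zmod_localRing p N hp hN
  haveI : Fact (1 < p ^ N) := ⟨Nat.one_lt_pow (by omega) hp.one_lt⟩
  have h1 : b ∣ a := Ideal.span_singleton_le_span_singleton.mp hs.le
  have h2 : a ∣ b := Ideal.span_singleton_le_span_singleton.mp hs.ge
  obtain ⟨x, hx⟩ := h1
  obtain ⟨y, hy⟩ := h2
  rcases IsLocalRing.isUnit_or_isUnit_one_sub_self (y * x) with h | h
  · exact ⟨x, isUnit_of_mul_isUnit_right h, by rw [hx, mul_comm]⟩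
  · have hzero : b * (1 - y * x) = 0 := by linear_combination hy + y * hx
    have hb0 : b = 0 := (IsUnit.mul_left_eq_zero h).mp hzero
    refine ⟨1, isUnit_one, ?_⟩
    rw [hx, hb0]
    ring

end ZMod

end Stmt5Aux

open Stmt5Aux in
theorem stmt5 (p : ℕ) (hp : p.Prime) (N : ℕ) (hN : 1 ≤ N)
    (g h : Matrix.GeneralLinearGroup (Fin 2) (ZMod (p ^ N))) :
    doubleCoset g = doubleCoset h ↔
      Ideal.span {(g : Matrix (Fin 2) (Fin 2) (ZMod (p ^ N))) 1 0}
        = Ideal.span {(h : Matrix (Fin 2) (Fin 2) (ZMod (p ^ N))) 1 0} := by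
  haveI := zmod_localRing p N hp hN
  constructor
  · intro hdc
    have hm : h ∈ doubleCoset g := by rw [hdc]; exact mem_dc_self h
    obtain ⟨b₁, hb₁, b₂, hb₂, rfl⟩ := hm
    rw [entry_mul hb₁ hb₂ g]
    exact (Ideal.span_singleton_mul_left_unit ((isUnit_11 hb₁).mul (isUnit_00 hb₂)) _).symm
  · intro hs
    obtain ⟨u, hu, hub⟩ := exists_unit_of_span_eq p N hp hN hs
    have e1 := dc_eq_of_mem (mem_dc_lower g)
    have e2 := dc_eq_of_mem (mem_dc_lower h)
    have e3 := dc_eq_of_mem (lower_unit_mem (c := (h : Matrix (Fin 2) (Fin 2) (ZMod (p ^ N))) 1 0) hu)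
    rw [e1, e2, ← e3, hub]
end

section
/- For every integer k ≥ 0 and every s ∈ ℂ with Re(s) > 0, one has ∫_{−1}^{1} ((1 − t)/2)^{s−1} P_k(t) dt = (−1)^k · 2 · (∏_{j=1}^{k} (s − j)) / (∏_{j=0}^{k} (s + j)), where P_k is the k-th Legendre polynomial. (For k = 0 the empty product in the numerator equals 1 and the identity reads ∫_{−1}^{1} ((1−t)/2)^{s−1} dt = 2/s.) -/
open Complex

/-- The `k`-th Legendre polynomial (as a function on `ℝ`), via Rodrigues' formula. -/
noncomputable def legendreP (k : ℕ) (t : ℝ) : ℝ :=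
  (1 / (2 ^ k * (Nat.factorial k) : ℝ)) *
    iteratedDeriv k (fun x : ℝ => (x ^ 2 - 1) ^ k) t

/-!
Substituting `t = 1 - 2x` gives `2 ∫₀¹ x^(s-1) P_k(1-2x) dx`. Leibniz' rule applied to
`(x+1)^k (x-1)^k` gives `P_k(1-2x) = ∑ C(k,j)² (-x)^j (1-x)^(k-j)`, so each term is a Beta integral
`B(s+j, k-j+1) = (k-j)! ∏_{m<j} (s+m) / ∏_{m≤k} (s+m)`. Over this common denominator the numerator
`∑ C(k,j)² (k-j)! (-1)^j ∏_{m<j} (s+m)` is the Chu–Vandermonde convolution of the falling factorials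
of `-s` and of `k`, i.e. the falling factorial `(k-s)(k-1-s)⋯(1-s)`.
-/

open Finset Polynomial

theorem Nat.descFactorial_mul_descFactorial_sub {k j : ℕ} (hj : j ≤ k) :
    k.descFactorial j * k.descFactorial (k - j) = k.choose j * k.factorial := by
  rw [Nat.descFactorial_eq_factorial_mul_choose k (k - j), Nat.choose_symm hj, ← mul_assoc,
    mul_comm (k.descFactorial j), Nat.factorial_mul_descFactorial hj, mul_comm]

theorem descPochhammer_smeval_eq_prod_range {R : Type*} [CommRing R] (r : R) (n : ℕ) :
    (descPochhammer ℤ n).smeval r = ∏ m ∈ range n, (r - m) := by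
  induction n with
  | zero => simp
  | succ n ih =>
    rw [descPochhammer_succ_right, smeval_mul, ih, prod_range_succ, smeval_sub, smeval_X,
      smeval_natCast]
    simp

theorem sum_choose_mul_prod_sub_mul_descFactorial {R : Type*} [CommRing R] (y : R) (k : ℕ) :
    ∑ j ∈ range (k + 1),
        (k.choose j : R) * ((∏ m ∈ range j, (y - m)) * k.descFactorial (k - j)) =
      ∏ m ∈ range k, (y + k - m) := by
  have vandermonde := Ring.descPochhammer_smeval_add (r := y) (s := (k : R)) k (Commute.all _ _)
  simp only [descPochhammer_smeval_eq_descFactorial] at vandermonde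
  simp only [descPochhammer_smeval_eq_prod_range,
    Nat.sum_antidiagonal_eq_sum_range_succ
      (fun i j => (k.choose i : R) * ((∏ m ∈ range i, (y - m)) * k.descFactorial j))]
    at vandermonde
  exact vandermonde.symm

theorem prod_range_sub_eq_prod_Icc {R : Type*} [CommRing R] (s : R) (k : ℕ) :
    ∏ m ∈ range k, (s - (k - m : ℕ)) = ∏ j ∈ Icc 1 k, (s - j) := by
  rw [← Nat.Ico_zero_eq_range, prod_Ico_reflect (fun j => s - j) 0 (Nat.le_succ k)]
  simp [Finset.Ico_add_one_right_eq_Icc]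

theorem sum_choose_sq_mul_factorial_mul_prod_add {R : Type*} [CommRing R] (s : R) (k : ℕ) :
    ∑ j ∈ range (k + 1),
        (k.choose j : R) ^ 2 * (k - j).factorial * ((-1) ^ j * ∏ m ∈ range j, (s + m)) =
      (-1) ^ k * ∏ j ∈ Icc 1 k, (s - j) := by
  have neg_prod (n : ℕ) : ∏ m ∈ range n, (-s - m) = (-1) ^ n * ∏ m ∈ range n, (s + m) := by
    simp_rw [← neg_add', prod_neg, card_range]
  have summand (j : ℕ) (hj : j ∈ range (k + 1)) :
      (k.choose j : R) ^ 2 * (k - j).factorial * ((-1) ^ j * ∏ m ∈ range j, (s + m)) =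
        (k.choose j : R) * ((∏ m ∈ range j, (-s - m)) * k.descFactorial (k - j)) := by
    rw [neg_prod, Nat.descFactorial_eq_factorial_mul_choose,
      Nat.choose_symm (Nat.lt_succ_iff.1 (mem_range.1 hj))]
    push_cast
    ring
  rw [sum_congr rfl summand, sum_choose_mul_prod_sub_mul_descFactorial,
    ← prod_range_sub_eq_prod_Icc, show (-1 : R) ^ k = (-1) ^ #(range k) by rw [card_range],
    ← prod_neg]
  refine prod_congr rfl fun m hm => ?_
  rw [Nat.cast_sub (mem_range.1 hm).le]
  ring

theorem iteratedDeriv_sub_const_pow {𝕜 : Type*} [NontriviallyNormedField 𝕜] (a : 𝕜)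
    (m n : ℕ) :
    iteratedDeriv n (fun x => (x - a) ^ m) = fun x => m.descFactorial n * (x - a) ^ (m - n) := by
  rw [iteratedDeriv_comp_sub_const n (· ^ m) a]
  simp

theorem legendreP_eq_sum (k : ℕ) (t : ℝ) :
    legendreP k t = ∑ j ∈ range (k + 1),
      (k.choose j : ℝ) ^ 2 * ((t - 1) / 2) ^ j * ((t + 1) / 2) ^ (k - j) := by
  have factor : (fun x : ℝ => (x ^ 2 - 1) ^ k) = fun x => (x - -1) ^ k * (x - 1) ^ k := by
    funext x
    rw [← mul_pow]
    ring
  rw [legendreP, factor, iteratedDeriv_fun_mul (by fun_prop) (by fun_prop), mul_sum]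
  refine sum_congr rfl fun j hj => ?_
  have hjk : j ≤ k := Nat.lt_succ_iff.1 (mem_range.1 hj)
  have coeff : (k.descFactorial j * k.descFactorial (k - j) : ℝ) = k.choose j * k.factorial := by
    exact_mod_cast Nat.descFactorial_mul_descFactorial_sub hjk
  have two_pow : (2 : ℝ) ^ k = 2 ^ j * 2 ^ (k - j) := by
    rw [← pow_add, Nat.add_sub_cancel' hjk]
  simp only [iteratedDeriv_sub_const_pow]
  rw [Nat.sub_sub_self hjk, sub_neg_eq_add, two_pow, div_pow, div_pow]
  field_simp
  linear_combination (k.choose j * (t - 1) ^ j * (t + 1) ^ (k - j)) * coeff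

theorem legendreP_one_sub_two_mul (k : ℕ) (x : ℝ) :
    legendreP k (1 - 2 * x) =
      ∑ j ∈ range (k + 1), (k.choose j : ℝ) ^ 2 * (-x) ^ j * (1 - x) ^ (k - j) := by
  rw [legendreP_eq_sum]
  refine sum_congr rfl fun j _ => ?_
  ring_nf

theorem intervalIntegral.integral_neg_one_one_eq_two_smul {E : Type*} [NormedAddCommGroup E]
    [NormedSpace ℝ E] (f : ℝ → E) :
    ∫ t in (-1 : ℝ)..1, f t = (2 : ℝ) • ∫ x in (0 : ℝ)..1, f (1 - 2 * x) := by
  rw [intervalIntegral.integral_comp_sub_mul f two_ne_zero, smul_inv_smul₀ two_ne_zero]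
  norm_num

namespace Complex

theorem add_natCast_ne_zero {s : ℂ} (hs : 0 < s.re) (n : ℕ) : s + n ≠ 0 := by
  intro h
  have := congrArg re h
  simp only [add_re, natCast_re, zero_re] at this
  linarith [n.cast_nonneg (α := ℝ)]

theorem cpow_sub_one_mul_pow {s : ℂ} (hs : 0 < s.re) (x : ℂ) (n : ℕ) :
    x ^ (s - 1) * x ^ n = x ^ (s + n - 1) := by
  rcases eq_or_ne x 0 with rfl | hx
  · rcases n.eq_zero_or_pos with rfl | hn
    · simp
    · rw [zero_pow hn.ne', mul_zero, zero_cpow]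
      intro h
      have := congrArg re h
      simp only [sub_re, add_re, natCast_re, one_re, zero_re] at this
      linarith [show (1 : ℝ) ≤ n by exact_mod_cast hn]
  · rw [add_sub_right_comm, cpow_add _ _ hx, cpow_natCast]

theorem cpow_sub_one_mul_pow_mul_one_sub_pow {s : ℂ} (hs : 0 < s.re) (a b : ℕ) :
    (fun x : ℝ => (x : ℂ) ^ (s - 1) * ((x : ℂ) ^ a * (1 - (x : ℂ)) ^ b)) =
      fun x : ℝ => (x : ℂ) ^ (s + a - 1) * (1 - (x : ℂ)) ^ ((b + 1 : ℂ) - 1) := by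
  simp only [← mul_assoc, cpow_sub_one_mul_pow hs, add_sub_cancel_right, cpow_natCast]

theorem intervalIntegrable_cpow_mul_pow_mul_one_sub_pow {s : ℂ} (hs : 0 < s.re) (a b : ℕ) :
    IntervalIntegrable (fun x : ℝ => (x : ℂ) ^ (s - 1) * ((x : ℂ) ^ a * (1 - (x : ℂ)) ^ b))
      MeasureTheory.volume 0 1 := by
  rw [cpow_sub_one_mul_pow_mul_one_sub_pow hs]
  exact betaIntegral_convergent (by simp only [add_re, natCast_re]; positivity)
    (by simp only [add_re, natCast_re, one_re]; positivity)

theorem integral_cpow_mul_pow_mul_one_sub_pow {s : ℂ} (hs : 0 < s.re) (a b : ℕ) :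
    ∫ x in (0 : ℝ)..1, (x : ℂ) ^ (s - 1) * ((x : ℂ) ^ a * (1 - (x : ℂ)) ^ b) =
      betaIntegral (s + a) (b + 1) := by
  rw [cpow_sub_one_mul_pow_mul_one_sub_pow hs, betaIntegral]

theorem betaIntegral_add_natCast {s : ℂ} (hs : 0 < s.re) {j k : ℕ} (hjk : j ≤ k) :
    betaIntegral (s + j) ((k - j : ℕ) + 1) =
      (∏ m ∈ range j, (s + m)) * (k - j).factorial / ∏ m ∈ range (k + 1), (s + m) := by
  have hsj : 0 < (s + j).re := by simp only [add_re, natCast_re]; positivity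
  have split : ∏ m ∈ range (k + 1), (s + m) =
      (∏ m ∈ range j, (s + m)) * ∏ m ∈ range (k - j + 1), (s + j + m) := by
    rw [show k + 1 = j + (k - j + 1) by omega, prod_range_add]
    simp [add_assoc]
  have hprod : ∏ m ∈ range j, (s + m) ≠ 0 :=
    prod_ne_zero_iff.2 fun m _ => add_natCast_ne_zero hs m
  rw [betaIntegral_eval_nat_add_one_right hsj, split, mul_div_mul_left _ _ hprod]

end Complex

theorem integral_cpow_mul_legendreP_one_sub_two_mul {s : ℂ} (hs : 0 < s.re) (k : ℕ) :
    ∫ x in (0 : ℝ)..1, (x : ℂ) ^ (s - 1) * (legendreP k (1 - 2 * x) : ℂ) =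
      ∑ j ∈ range (k + 1),
        (k.choose j : ℂ) ^ 2 * (k - j).factorial * ((-1) ^ j * ∏ m ∈ range j, (s + m)) /
          ∏ m ∈ range (k + 1), (s + m) := by
  have expand (x : ℝ) : (x : ℂ) ^ (s - 1) * (legendreP k (1 - 2 * x) : ℂ) =
      ∑ j ∈ range (k + 1), ((k.choose j : ℂ) ^ 2 * (-1) ^ j) *
        ((x : ℂ) ^ (s - 1) * ((x : ℂ) ^ j * (1 - (x : ℂ)) ^ (k - j))) := by
    rw [legendreP_one_sub_two_mul]
    push_cast
    rw [mul_sum]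
    refine sum_congr rfl fun j _ => ?_
    rw [neg_pow]
    ring
  simp_rw [expand]
  rw [intervalIntegral.integral_finsetSum fun j _ =>
    (intervalIntegrable_cpow_mul_pow_mul_one_sub_pow hs j (k - j)).const_mul _]
  refine sum_congr rfl fun j hj => ?_
  rw [intervalIntegral.integral_const_mul, integral_cpow_mul_pow_mul_one_sub_pow hs,
    betaIntegral_add_natCast hs (Nat.lt_succ_iff.1 (mem_range.1 hj))]
  ring

theorem stmt7 (k : ℕ) (s : ℂ) (hs : 0 < s.re) :
    (∫ t in (-1 : ℝ)..1, ((1 - (t : ℂ)) / 2) ^ (s - 1) * (legendreP k t : ℂ))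
      = (-1) ^ k * 2 * (∏ j ∈ Finset.Icc 1 k, (s - (j : ℂ))) /
          (∏ j ∈ Finset.range (k + 1), (s + (j : ℂ))) := by
  have substitute (x : ℝ) : (1 - ((1 - 2 * x : ℝ) : ℂ)) / 2 = x := by
    push_cast
    ring
  rw [intervalIntegral.integral_neg_one_one_eq_two_smul]
  simp only [substitute]
  rw [integral_cpow_mul_legendreP_one_sub_two_mul hs, ← sum_div,
    sum_choose_sq_mul_factorial_mul_prod_add, real_smul]
  push_cast
  ring
end

section
/- Let p ≥ 1 and k ≥ p+1 be integers with k ≡ p+1 (mod 2). Then ∫_{ℝ} ∫_{0}^{∞} (x² + (y+1)²)^{−(k+p+1)/2} · (x² + (y−1)²)^{(k−p−1)/2} · y^{p−1} dy dx = π · 4^{−p} · Γ((k−p+1)/2) · Γ(p) / Γ((k+p+1)/2). -/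
/-!
Write `k = 2b + p + 1`. For fixed `y > 0`, write `x² + (y - 1)² = (x² + (y + 1)²) - 4y` and
expand the `b`-th power binomially. Each term is a multiple of `∫ (x² + A²)^(-(n+1)) dx`, which
integration by parts reduces to `∫ (1 + x²)⁻¹ dx = π`. Integrating the resulting terms in `y`
gives Beta integrals (substitute `t = y / (1 + y)`), and everything collapses to
`π 4^(-p) ∑ᵢ (-1)^i C(b, i) / (p + i) = π 4^(-p) B(p, b + 1)`.
-/

open Real MeasureTheory Filter Topology Set
open scoped Nat

theorem integrable_inv_one_add_sq_pow (n : ℕ) :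
    Integrable fun x : ℝ => ((1 + x ^ 2) ^ (n + 1))⁻¹ := by
  refine integrable_inv_one_add_sq.mono' (by fun_prop) (Eventually.of_forall fun x => ?_)
  rw [norm_inv, norm_of_nonneg (by positivity)]
  exact inv_anti₀ (by positivity) (le_self_pow₀ (by nlinarith) n.succ_ne_zero)

theorem tendsto_mul_inv_one_add_sq_pow_cocompact (n : ℕ) :
    Tendsto (fun x : ℝ => x * ((1 + x ^ 2) ^ (n + 1))⁻¹) (cocompact ℝ) (𝓝 0) := by
  refine squeeze_zero_norm' ?_ tendsto_norm_cocompact_atTop.inv_tendsto_atTop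
  filter_upwards [(isCompact_singleton (x := (0 : ℝ))).compl_mem_cocompact] with x hx
  have hx : 0 < |x| := abs_pos.2 hx
  have hle : |x| ^ 2 ≤ (1 + x ^ 2) ^ (n + 1) := by
    rw [sq_abs]
    exact (le_add_of_nonneg_left zero_le_one).trans (le_self_pow₀ (by nlinarith) n.succ_ne_zero)
  calc ‖x * ((1 + x ^ 2) ^ (n + 1))⁻¹‖ = |x| * ((1 + x ^ 2) ^ (n + 1))⁻¹ := by
        rw [norm_mul, norm_inv, norm_eq_abs, norm_eq_abs,
          abs_of_pos (by positivity : (0 : ℝ) < (1 + x ^ 2) ^ (n + 1))]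
    _ ≤ |x| * (|x| ^ 2)⁻¹ := by
        have := pow_pos hx 2
        gcongr
    _ = ‖x‖⁻¹ := by rw [norm_eq_abs]; field_simp

theorem hasDerivAt_mul_inv_one_add_sq_pow (n : ℕ) (x : ℝ) :
    HasDerivAt (fun x : ℝ => x * ((1 + x ^ 2) ^ (n + 1))⁻¹)
      ((2 * n + 2) * ((1 + x ^ 2) ^ (n + 2))⁻¹ - (2 * n + 1) * ((1 + x ^ 2) ^ (n + 1))⁻¹)
      x := by
  have hu : 1 + x ^ 2 ≠ 0 := by positivity
  refine ((hasDerivAt_id' x).fun_mul ((((hasDerivAt_pow 2 x).const_add 1).fun_pow (n + 1)).fun_inv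
    (pow_ne_zero _ hu))).congr_deriv ?_
  field_simp
  push_cast
  ring

theorem integral_inv_one_add_sq_pow_succ (n : ℕ) :
    ∫ x : ℝ, ((1 + x ^ 2) ^ (n + 2))⁻¹ =
      (2 * n + 1 : ℝ) / (2 * n + 2) * ∫ x : ℝ, ((1 + x ^ 2) ^ (n + 1))⁻¹ := by
  have hlim := tendsto_mul_inv_one_add_sq_pow_cocompact n
  rw [cocompact_eq_atBot_atTop, tendsto_sup] at hlim
  have hint₁ := (integrable_inv_one_add_sq_pow (n + 1)).const_mul (2 * n + 2 : ℝ)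
  have hint₀ := (integrable_inv_one_add_sq_pow n).const_mul (2 * n + 1 : ℝ)
  have h := integral_of_hasDerivAt_of_tendsto (hasDerivAt_mul_inv_one_add_sq_pow n)
    (hint₁.sub hint₀) hlim.1 hlim.2
  rw [integral_sub hint₁ hint₀, integral_const_mul, integral_const_mul, sub_self,
    sub_eq_zero] at h
  rw [div_mul_eq_mul_div, eq_div_iff (by positivity)]
  linear_combination h

theorem integral_inv_one_add_sq_pow (n : ℕ) :
    ∫ x : ℝ, ((1 + x ^ 2) ^ (n + 1))⁻¹ = π * (2 * n)! / (4 ^ n * (n ! : ℝ) ^ 2) := by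
  induction n with
  | zero => simp [integral_univ_inv_one_add_sq]
  | succ n ih =>
    rw [integral_inv_one_add_sq_pow_succ, ih, show 2 * (n + 1) = 2 * n + 1 + 1 by ring,
      Nat.factorial_succ (2 * n + 1), Nat.factorial_succ (2 * n), Nat.factorial_succ n]
    push_cast
    field_simp
    ring

theorem inv_sq_add_sq_pow_eq {c : ℝ} (hc : c ≠ 0) (n : ℕ) (x : ℝ) :
    ((x ^ 2 + c ^ 2) ^ (n + 1))⁻¹ =
      (c ^ (2 * n + 2))⁻¹ * ((1 + (x / c) ^ 2) ^ (n + 1))⁻¹ := by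
  rw [← mul_inv, show 2 * n + 2 = 2 * (n + 1) by ring, pow_mul, ← mul_pow]
  congr 2
  field_simp
  ring

theorem integrable_inv_sq_add_sq_pow (n : ℕ) {c : ℝ} (hc : c ≠ 0) :
    Integrable fun x : ℝ => ((x ^ 2 + c ^ 2) ^ (n + 1))⁻¹ := by
  simp_rw [inv_sq_add_sq_pow_eq hc]
  exact ((integrable_inv_one_add_sq_pow n).comp_div hc).const_mul _

theorem integral_inv_sq_add_sq_pow (n : ℕ) {c : ℝ} (hc : 0 < c) :
    ∫ x : ℝ, ((x ^ 2 + c ^ 2) ^ (n + 1))⁻¹ =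
      (c ^ (2 * n + 1))⁻¹ * (π * (2 * n)! / (4 ^ n * (n ! : ℝ) ^ 2)) := by
  simp_rw [inv_sq_add_sq_pow_eq hc.ne']
  rw [integral_const_mul, Measure.integral_comp_div (fun x => ((1 + x ^ 2) ^ (n + 1))⁻¹),
    integral_inv_one_add_sq_pow, smul_eq_mul, abs_of_pos hc, ← mul_assoc, pow_succ, mul_inv,
    mul_assoc _ c⁻¹, inv_mul_cancel₀ hc.ne', mul_one]

theorem inv_pow_mul_add_pow_eq_sum {K : Type*} [Field K] {u : K} (hu : u ≠ 0) (d : K)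
    (b n : ℕ) :
    (u ^ (b + n + 1))⁻¹ * (u + d) ^ b =
      ∑ i ∈ Finset.range (b + 1), b.choose i * d ^ i * (u ^ (n + i + 1))⁻¹ := by
  rw [add_comm u, add_pow, Finset.mul_sum]
  refine Finset.sum_congr rfl fun i hi => ?_
  rw [show b + n + 1 = (b - i) + (n + i + 1) by grind, pow_add]
  field_simp

theorem inv_sq_add_sq_pow_mul_sq_add_sq_pow_eq_sum (b n : ℕ) {A : ℝ} (hA : A ≠ 0)
    (B x : ℝ) :
    ((x ^ 2 + A ^ 2) ^ (b + n + 1))⁻¹ * (x ^ 2 + B ^ 2) ^ b =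
      ∑ i ∈ Finset.range (b + 1),
        b.choose i * (B ^ 2 - A ^ 2) ^ i * ((x ^ 2 + A ^ 2) ^ (n + i + 1))⁻¹ := by
  rw [← inv_pow_mul_add_pow_eq_sum (by positivity)]
  ring

theorem integrable_inv_sq_add_sq_pow_mul_sq_add_sq_pow (b n : ℕ) {A : ℝ} (hA : A ≠ 0)
    (B : ℝ) :
    Integrable fun x : ℝ => ((x ^ 2 + A ^ 2) ^ (b + n + 1))⁻¹ * (x ^ 2 + B ^ 2) ^ b := by
  simp_rw [inv_sq_add_sq_pow_mul_sq_add_sq_pow_eq_sum b n hA B]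
  exact integrable_finsetSum _ fun i _ => (integrable_inv_sq_add_sq_pow (n + i) hA).const_mul _

theorem integral_inv_sq_add_sq_pow_mul_sq_add_sq_pow (b n : ℕ) {A : ℝ} (hA : 0 < A) (B : ℝ) :
    ∫ x : ℝ, ((x ^ 2 + A ^ 2) ^ (b + n + 1))⁻¹ * (x ^ 2 + B ^ 2) ^ b =
      ∑ i ∈ Finset.range (b + 1), b.choose i * (B ^ 2 - A ^ 2) ^ i *
        ((A ^ (2 * (n + i) + 1))⁻¹ *
          (π * (2 * (n + i))! / (4 ^ (n + i) * ((n + i)! : ℝ) ^ 2))) := by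
  simp_rw [inv_sq_add_sq_pow_mul_sq_add_sq_pow_eq_sum b n hA.ne' B]
  rw [integral_finsetSum _ fun i _ => (integrable_inv_sq_add_sq_pow (n + i) hA.ne').const_mul _]
  simp_rw [integral_const_mul, integral_inv_sq_add_sq_pow _ hA]

theorem integral_pow_mul_one_sub_pow (m n : ℕ) :
    ∫ t in (0 : ℝ)..1, t ^ m * (1 - t) ^ n = m ! * n ! / (m + n + 1)! := by
  have h := Complex.betaIntegral_eq_Gamma_mul_div (m + 1) (n + 1)
    (by simp; positivity) (by simp; positivity)
  rw [show (m + 1 : ℂ) + (n + 1) = (m + n + 1 : ℕ) + 1 by push_cast; ring] at h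
  simp only [Complex.betaIntegral, add_sub_cancel_right, Complex.cpow_natCast,
    Complex.Gamma_nat_eq_factorial] at h
  apply Complex.ofReal_injective
  rw [← intervalIntegral.integral_ofReal]
  push_cast
  exact h

theorem sum_neg_one_pow_mul_choose_div (q b : ℕ) :
    ∑ i ∈ Finset.range (b + 1), (-1 : ℝ) ^ i * b.choose i / (q + 1 + i) =
      q ! * b ! / (q + b + 1)! := by
  have hexp (t : ℝ) : t ^ q * (1 - t) ^ b =
      ∑ i ∈ Finset.range (b + 1), (-1) ^ i * b.choose i * t ^ (q + i) := by
    rw [sub_eq_neg_add, add_pow, Finset.mul_sum]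
    refine Finset.sum_congr rfl fun i _ => ?_
    rw [one_pow, mul_one, neg_pow, pow_add]
    ring
  rw [← integral_pow_mul_one_sub_pow]
  simp_rw [hexp]
  rw [intervalIntegral.integral_finsetSum fun i _ =>
    (by fun_prop : Continuous _).intervalIntegrable _ _]
  refine Finset.sum_congr rfl fun i _ => ?_
  rw [intervalIntegral.integral_const_mul, integral_pow]
  push_cast
  ring

theorem image_div_one_add_Ioi : (fun y : ℝ => y / (1 + y)) '' Ioi 0 = Ioo 0 1 := by
  ext t
  constructor
  · rintro ⟨y, hy, rfl⟩
    have hy : 0 < y := hy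
    exact ⟨by positivity, (div_lt_one (by positivity)).2 (by linarith)⟩
  · rintro ⟨ht0, ht1⟩
    refine ⟨t / (1 - t), div_pos ht0 (by linarith), ?_⟩
    have : 1 - t ≠ 0 := by linarith
    field_simp
    ring

theorem injOn_div_one_add : InjOn (fun y : ℝ => y / (1 + y)) (Ioi 0) := by
  intro y (hy : 0 < y) z (hz : 0 < z) h
  field_simp at h
  linarith

theorem hasDerivAt_div_one_add {y : ℝ} (hy : 0 < y) :
    HasDerivAt (fun y : ℝ => y / (1 + y)) ((1 + y) ^ 2)⁻¹ y :=
  ((hasDerivAt_id' y).div ((hasDerivAt_id' y).const_add 1) (by positivity)).congr_deriv (by ring)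

theorem abs_deriv_smul_pow_mul_one_sub_pow (m n : ℕ) {y : ℝ} (hy : 0 < y) :
    |((1 + y) ^ 2)⁻¹| • ((y / (1 + y)) ^ m * (1 - y / (1 + y)) ^ n) =
      y ^ m * ((1 + y) ^ (m + n + 2))⁻¹ := by
  have : 1 + y ≠ 0 := by positivity
  rw [abs_of_pos (by positivity), smul_eq_mul, one_sub_div this, add_sub_cancel_right, div_pow,
    div_pow, one_pow]
  field_simp
  ring

theorem integrableOn_Ioi_pow_mul_inv_one_add_pow (m n : ℕ) :
    IntegrableOn (fun y : ℝ => y ^ m * ((1 + y) ^ (m + n + 2))⁻¹) (Ioi 0) := by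
  have hint : IntegrableOn (fun t : ℝ => t ^ m * (1 - t) ^ n) (Ioo 0 1) :=
    (by fun_prop : Continuous fun t : ℝ => t ^ m * (1 - t) ^ n).integrableOn_Icc.mono_set
      Ioo_subset_Icc_self
  rw [← image_div_one_add_Ioi, integrableOn_image_iff_integrableOn_abs_deriv_smul
    measurableSet_Ioi (fun y hy => (hasDerivAt_div_one_add hy).hasDerivWithinAt)
    injOn_div_one_add] at hint
  exact hint.congr_fun (fun y hy => abs_deriv_smul_pow_mul_one_sub_pow m n hy) measurableSet_Ioi

theorem integral_Ioi_pow_mul_inv_one_add_pow (m n : ℕ) :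
    ∫ y in Ioi (0 : ℝ), y ^ m * ((1 + y) ^ (m + n + 2))⁻¹ = m ! * n ! / (m + n + 1)! := by
  rw [← setIntegral_congr_fun measurableSet_Ioi
      fun y hy => abs_deriv_smul_pow_mul_one_sub_pow m n hy,
    ← integral_image_eq_integral_abs_deriv_smul (g := fun t => t ^ m * (1 - t) ^ n)
      measurableSet_Ioi (fun y hy => (hasDerivAt_div_one_add hy).hasDerivWithinAt)
      injOn_div_one_add,
    image_div_one_add_Ioi, ← integral_Ioc_eq_integral_Ioo,
    ← intervalIntegral.integral_of_le zero_le_one, integral_pow_mul_one_sub_pow]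

-- `|e_k(x + iy)|² y^(p-1)` for `p = q + 1` and `k = 2b + q + 2`
noncomputable def normSqDensity (b q : ℕ) (x y : ℝ) : ℝ :=
  ((x ^ 2 + (y + 1) ^ 2) ^ (b + q + 2))⁻¹ * (x ^ 2 + (y - 1) ^ 2) ^ b * y ^ q

theorem integrable_normSqDensity_left (b q : ℕ) {y : ℝ} (hy : 0 < y) :
    Integrable fun x => normSqDensity b q x y :=
  (integrable_inv_sq_add_sq_pow_mul_sq_add_sq_pow b (q + 1) (by positivity : y + 1 ≠ 0)
    (y - 1)).mul_const _

theorem integral_normSqDensity_left (b q : ℕ) {y : ℝ} (hy : 0 < y) :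
    ∫ x, normSqDensity b q x y = ∑ i ∈ Finset.range (b + 1),
      b.choose i * (-4) ^ i *
        (π * (2 * (q + 1 + i))! / (4 ^ (q + 1 + i) * ((q + 1 + i)! : ℝ) ^ 2)) *
        (y ^ (q + i) * ((1 + y) ^ (q + i + (q + i + 1) + 2))⁻¹) := by
  simp only [normSqDensity]
  rw [show b + q + 2 = b + (q + 1) + 1 by ring, integral_mul_const,
    integral_inv_sq_add_sq_pow_mul_sq_add_sq_pow b (q + 1) (by positivity), Finset.sum_mul]
  refine Finset.sum_congr rfl fun i _ => ?_
  rw [show (y - 1) ^ 2 - (y + 1) ^ 2 = -4 * y by ring,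
    show 2 * (q + 1 + i) + 1 = q + i + (q + i + 1) + 2 by ring, add_comm y 1]
  ring

theorem integrable_normSqDensity (b q : ℕ) :
    Integrable (Function.uncurry (normSqDensity b q)) (volume.prod (volume.restrict (Ioi 0))) := by
  have hmeas : Measurable (Function.uncurry (normSqDensity b q)) := by
    unfold normSqDensity
    fun_prop
  rw [integrable_prod_iff' hmeas.aestronglyMeasurable]
  refine ⟨(ae_restrict_mem measurableSet_Ioi).mono fun y hy =>
    integrable_normSqDensity_left b q hy, ?_⟩
  have hint : IntegrableOn (fun y => ∫ x, normSqDensity b q x y) (Ioi 0) :=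
    IntegrableOn.congr_fun (integrable_finsetSum _ fun i _ =>
        (integrableOn_Ioi_pow_mul_inv_one_add_pow _ _).const_mul _)
      (fun y hy => (integral_normSqDensity_left b q hy).symm) measurableSet_Ioi
  refine hint.congr ((ae_restrict_mem measurableSet_Ioi).mono fun y (hy : 0 < y) =>
    integral_congr_ae (Eventually.of_forall fun x => (norm_of_nonneg ?_).symm))
  unfold normSqDensity
  positivity

theorem choose_mul_neg_four_pow_mul_factorials_eq (b q i : ℕ) :
    b.choose i * (-4 : ℝ) ^ i *
        (π * (2 * (q + 1 + i))! / (4 ^ (q + 1 + i) * ((q + 1 + i)! : ℝ) ^ 2)) *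
        ((q + i)! * (q + i + 1)! / (q + i + (q + i + 1) + 1)!) =
      π / 4 ^ (q + 1) * ((-1) ^ i * b.choose i / (q + 1 + i)) := by
  have hm : (q + 1 + i)! = (q + 1 + i) * (q + i)! := by
    rw [show q + 1 + i = q + i + 1 by ring, Nat.factorial_succ]
  rw [show q + i + (q + i + 1) + 1 = 2 * (q + 1 + i) by ring, show q + i + 1 = q + 1 + i by ring,
    hm, pow_add 4 (q + 1) i, show (-4 : ℝ) ^ i = (-1) ^ i * 4 ^ i by rw [← mul_pow]; norm_num]
  push_cast
  field_simp

theorem rpow_integrand_eq_normSqDensity (b q : ℕ) (x y : ℝ) :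
    (x ^ 2 + (y + 1) ^ 2) ^ (-((((2 * b + q + 2 : ℕ) : ℝ) + (q + 1 : ℕ) + 1) / 2)) *
        (x ^ 2 + (y - 1) ^ 2) ^ ((((2 * b + q + 2 : ℕ) : ℝ) - (q + 1 : ℕ) - 1) / 2) *
        y ^ (((q + 1 : ℕ) : ℝ) - 1) =
      normSqDensity b q x y := by
  rw [show (((2 * b + q + 2 : ℕ) : ℝ) + (q + 1 : ℕ) + 1) / 2 = ((b + q + 2 : ℕ) : ℝ) by
      push_cast; ring,
    show (((2 * b + q + 2 : ℕ) : ℝ) - (q + 1 : ℕ) - 1) / 2 = (b : ℝ) by push_cast; ring,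
    show ((q + 1 : ℕ) : ℝ) - 1 = q by push_cast; ring, rpow_neg (by positivity), rpow_natCast,
    rpow_natCast, rpow_natCast, normSqDensity]

theorem pi_div_four_pow_mul_beta_eq_Gamma (b q : ℕ) :
    π / 4 ^ (q + 1) * (q ! * b ! / (q + b + 1)!) =
      π * (4 : ℝ) ^ (-((q + 1 : ℕ) : ℝ)) *
        Gamma ((((2 * b + q + 2 : ℕ) : ℝ) - (q + 1 : ℕ) + 1) / 2) * Gamma (q + 1 : ℕ) /
        Gamma ((((2 * b + q + 2 : ℕ) : ℝ) + (q + 1 : ℕ) + 1) / 2) := by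
  rw [show (((2 * b + q + 2 : ℕ) : ℝ) - (q + 1 : ℕ) + 1) / 2 = (b : ℝ) + 1 by
      push_cast; ring,
    show (((2 * b + q + 2 : ℕ) : ℝ) + (q + 1 : ℕ) + 1) / 2 = ((q + b + 1 : ℕ) : ℝ) + 1 by
      push_cast; ring,
    Nat.cast_succ q, Gamma_nat_eq_factorial, Gamma_nat_eq_factorial, Gamma_nat_eq_factorial,
    rpow_neg zero_le_four, ← Nat.cast_add_one, rpow_natCast]
  ring

theorem stmt9 (p k : ℕ) (hp : 1 ≤ p) (hk : p + 1 ≤ k) (hpar : k % 2 = (p + 1) % 2) :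
    (∫ x : ℝ, ∫ y in Set.Ioi (0 : ℝ),
        (x ^ 2 + (y + 1) ^ 2) ^ (-(((k : ℝ) + p + 1) / 2)) *
          (x ^ 2 + (y - 1) ^ 2) ^ (((k : ℝ) - p - 1) / 2) * y ^ ((p : ℝ) - 1))
      = Real.pi * (4 : ℝ) ^ (-(p : ℝ)) * Real.Gamma (((k : ℝ) - p + 1) / 2) *
          Real.Gamma p / Real.Gamma (((k : ℝ) + p + 1) / 2) := by
  obtain ⟨q, rfl⟩ : ∃ q, p = q + 1 := ⟨p - 1, by omega⟩
  obtain ⟨b, rfl⟩ : ∃ b, k = 2 * b + q + 2 := ⟨(k - q - 2) / 2, by omega⟩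
  simp_rw [rpow_integrand_eq_normSqDensity]
  rw [integral_integral_swap (integrable_normSqDensity b q),
    setIntegral_congr_fun measurableSet_Ioi fun y hy => integral_normSqDensity_left b q hy,
    integral_finsetSum _ fun i _ => (integrableOn_Ioi_pow_mul_inv_one_add_pow _ _).const_mul _]
  simp_rw [integral_const_mul, integral_Ioi_pow_mul_inv_one_add_pow,
    choose_mul_neg_four_pow_mul_factorials_eq]
  rw [← Finset.mul_sum, sum_neg_one_pow_mul_choose_div, pi_div_four_pow_mul_beta_eq_Gamma]
end

section
/- (Upper bound) For every real T > 1 and every λ ∈ (0,1): (T^λ − T^{−λ})/λ ≤ (2 log T)^{1−λ} · (T − T^{−1})^λ. (Lower bound) For every ε > 0 there exists A(ε) > 0 such that for every real T > 1 and every λ ∈ (0,1): (T^λ − T^{−λ})/λ ≥ A(ε)^{−1} · (2 log T)^{1−λ+ε} · (T − T^{−1})^{λ−ε}. -/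
/-!
Write `L = log T` and `S x = sinh x / x`, the average of `u ↦ exp (x * u)` over `[-1, 1]`.
Then `(T ^ λ - T ^ (-λ)) / λ = 2L · S (λL)` and `T - T⁻¹ = 2L · S L`, so both bounds are
statements about `S`. Jensen for the concave map `t ↦ t ^ λ` gives `S (λL) ≤ (S L) ^ λ`.
For the lower bound, `S L ≤ exp L` and `S x ≥ exp x / (1 + 2x)` give
`S (λL) ≥ exp ((λ - ε) L) / A ≥ (S L) ^ (λ - ε) / A` with `A = 1 + 2/ε`, because
`1 + 2L ≤ A exp (εL)`; when `λ ≤ ε` it suffices that `S ≥ 1`.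
-/

open Real MeasureTheory Set

lemma setAverage_exp_mul_Icc {c : ℝ} (hc : c ≠ 0) :
    ⨍ u in Icc (-1 : ℝ) 1, exp (c * u) = sinh c / c := by
  rw [setAverage_eq, integral_Icc_eq_integral_Ioc,
    ← intervalIntegral.integral_of_le (by norm_num), intervalIntegral.integral_comp_mul_left exp hc, integral_exp, volume_real_Icc, sinh_eq]
  norm_num
  field_simp

lemma sinh_mul_div_le_rpow {L lam : ℝ} (hL : L ≠ 0) (h0 : 0 < lam) (h1 : lam ≤ 1) :
    sinh (lam * L) / (lam * L) ≤ (sinh L / L) ^ lam := by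
  have hexp : Continuous fun u : ℝ => exp (L * u) := by fun_prop
  have jensen := (concaveOn_rpow h0.le h1).le_map_set_average (μ := volume)
    (t := Icc (-1 : ℝ) 1) (continuousOn_id.rpow_const fun _ _ => Or.inr h0.le) isClosed_Ici
    (by simp) (by simp) (.of_forall fun u => (exp_pos (L * u)).le) hexp.integrableOn_Icc
    (hexp.rpow_const fun _ => Or.inr h0.le).integrableOn_Icc
  calc sinh (lam * L) / (lam * L)
      = ⨍ u in Icc (-1 : ℝ) 1, exp (L * u) ^ lam := by
        rw [← setAverage_exp_mul_Icc (mul_ne_zero h0.ne' hL)]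
        simp_rw [← exp_mul]
        congr! 3 with u
        ring
    _ ≤ (⨍ u in Icc (-1 : ℝ) 1, exp (L * u)) ^ lam := jensen
    _ = (sinh L / L) ^ lam := by rw [setAverage_exp_mul_Icc hL]

lemma sinh_le_mul_exp (x : ℝ) : sinh x ≤ x * exp x := by
  have h := add_one_le_exp (-2 * x)
  have hsplit : exp (-x) = exp x * exp (-2 * x) := by rw [← exp_add]; ring_nf
  rw [sinh_eq, hsplit]
  nlinarith [exp_pos x]

lemma mul_exp_le_mul_sinh (x : ℝ) : x * exp x ≤ (1 + 2 * x) * sinh x := by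
  have h := add_one_le_exp (2 * x)
  have hsplit : exp x = exp (-x) * exp (2 * x) := by rw [← exp_add]; ring_nf
  rw [sinh_eq]
  nlinarith [exp_pos (-x)]

lemma one_le_sinh_div_self {x : ℝ} (hx : 0 < x) : 1 ≤ sinh x / x := by
  rw [le_div_iff₀ hx, one_mul]
  exact self_le_sinh_iff.2 hx.le

lemma one_add_two_mul_le_mul_exp {ε x : ℝ} (hε : 0 < ε) (hx : 0 ≤ x) :
    1 + 2 * x ≤ (1 + 2 / ε) * exp (ε * x) := by
  have hexp := add_one_le_exp (ε * x)
  calc 1 + 2 * x ≤ 1 + 2 * x + ε * x + 2 / ε := by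
        have := mul_nonneg hε.le hx
        have : 0 ≤ 2 / ε := by positivity
        linarith
    _ = (1 + 2 / ε) * (ε * x + 1) := by field_simp; ring
    _ ≤ (1 + 2 / ε) * exp (ε * x) := by gcongr

lemma inv_mul_rpow_sub_le_sinh_mul_div {ε L lam : ℝ} (hε : 0 < ε) (hL : 0 < L) (h0 : 0 < lam)
    (h1 : lam ≤ 1) :
    (1 + 2 / ε)⁻¹ * (sinh L / L) ^ (lam - ε) ≤ sinh (lam * L) / (lam * L) := by
  set A := 1 + 2 / ε
  set x := lam * L
  have hA : 1 ≤ A := le_add_of_nonneg_right (by positivity)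
  have hx : 0 < x := by positivity
  have hSL := one_le_sinh_div_self hL
  have hSx := one_le_sinh_div_self hx
  rcases le_or_gt lam ε with hle | hlt
  · calc A⁻¹ * (sinh L / L) ^ (lam - ε)
        ≤ 1 * 1 := by
          gcongr
          · exact inv_le_one_of_one_le₀ hA
          · exact rpow_le_one_of_one_le_of_nonpos hSL (by linarith)
      _ ≤ sinh x / x := by linarith
  · have hexp_le : exp x ≤ (1 + 2 * x) * (sinh x / x) := by
      rw [← mul_div_assoc, le_div_iff₀ hx, mul_comm]
      exact mul_exp_le_mul_sinh x
    have hSL_le : sinh L / L ≤ exp L := by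
      rw [div_le_iff₀ hL, mul_comm]
      exact sinh_le_mul_exp L
    calc A⁻¹ * (sinh L / L) ^ (lam - ε)
        ≤ A⁻¹ * exp L ^ (lam - ε) := by gcongr
      _ = exp x / (A * exp (ε * L)) := by
        rw [← exp_mul, show L * (lam - ε) = x - ε * L by ring, exp_sub]
        field_simp
      _ ≤ (1 + 2 * x) * (sinh x / x) / (A * exp (ε * L)) := by gcongr
      _ ≤ sinh x / x := by
        rw [div_le_iff₀ (by positivity), mul_comm]
        gcongr
        calc 1 + 2 * x ≤ 1 + 2 * L := by gcongr; nlinarith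
          _ ≤ A * exp (ε * L) := one_add_two_mul_le_mul_exp hε hL.le

lemma rpow_sub_rpow_neg_div_eq {T : ℝ} (hT : 0 < T) (lam : ℝ) :
    (T ^ lam - T ^ (-lam)) / lam = 2 * log T * (sinh (lam * log T) / (lam * log T)) := by
  rw [rpow_def_of_pos hT, rpow_def_of_pos hT, sinh_eq]
  rcases eq_or_ne lam 0 with rfl | hlam
  · simp
  rcases eq_or_ne (log T) 0 with hL | hL
  · simp [hL]
  field_simp

lemma sub_inv_eq_two_mul_log_mul_sinh_log_div {T : ℝ} (hT : 0 < T) :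
    T - T⁻¹ = 2 * log T * (sinh (log T) / log T) := by
  simpa [rpow_neg_one] using rpow_sub_rpow_neg_div_eq hT 1

lemma rpow_one_sub_mul_mul_rpow {a b : ℝ} (ha : 0 < a) (hb : 0 ≤ b) (μ : ℝ) :
    a ^ (1 - μ) * (a * b) ^ μ = a * b ^ μ := by
  rw [mul_rpow ha.le hb, ← mul_assoc, ← rpow_add ha, sub_add_cancel, rpow_one]

theorem stmt10 :
    (∀ T lam : ℝ, 1 < T → 0 < lam → lam < 1 →
        (T ^ lam - T ^ (-lam)) / lam ≤ (2 * Real.log T) ^ (1 - lam) * (T - T⁻¹) ^ lam) ∧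
    (∀ ε : ℝ, 0 < ε → ∃ A : ℝ, 0 < A ∧
      ∀ T lam : ℝ, 1 < T → 0 < lam → lam < 1 →
        A⁻¹ * (2 * Real.log T) ^ (1 - lam + ε) * (T - T⁻¹) ^ (lam - ε)
          ≤ (T ^ lam - T ^ (-lam)) / lam) := by
  refine ⟨fun T lam hT h0 h1 => ?_,
    fun ε hε => ⟨1 + 2 / ε, by positivity, fun T lam hT h0 h1 => ?_⟩⟩
  all_goals
    have hL := log_pos hT
    have hS := (one_le_sinh_div_self hL).trans' zero_le_one
    rw [rpow_sub_rpow_neg_div_eq (by linarith),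
      sub_inv_eq_two_mul_log_mul_sinh_log_div (by linarith)]
  · rw [rpow_one_sub_mul_mul_rpow (by positivity) hS]
    gcongr
    exact sinh_mul_div_le_rpow hL.ne' h0 h1.le
  · rw [show 1 - lam + ε = 1 - (lam - ε) by ring, mul_assoc,
      rpow_one_sub_mul_mul_rpow (by positivity) hS, mul_left_comm]
    gcongr
    exact inv_mul_rpow_sub_le_sinh_mul_div hε hL h0 h1.le
end

section
/- Let g : (0, ∞) → ℂ be continuously differentiable with ‖g‖² := ∫_{0}^{∞} |g(t)|² dt/t < ∞ and M² := ∫_{0}^{∞} |t g′(t)|² dt/t < ∞. Then for every ε ∈ (0,1) there is a constant C_ε > 0 (independent of g) such that for all y > 0: 2 |g(y)| ≤ ‖g‖ + C_ε · M · max(y^{ε}, y^{−ε}). -/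
open MeasureTheory Set Filter Topology

/-!
Since `d/dt ‖g t‖² = 2 ⟪g t, g' t⟫` and `2 a b ≤ l a² / t + (t b)² / (l t)` for every `l > 0`,
the total variation of `‖g‖²` on `(0, ∞)` is at most `l ‖g‖² + M² / l`. As `‖g t‖² / t` is
integrable at infinity but `1 / t` is not, `‖g x‖²` is arbitrarily small for some large `x`, so `‖g y‖² ≤ l ‖g‖² + M² / l`, and optimising in `l` gives `‖g y‖² ≤ 2 ‖g‖ M`.
Then `2 ‖g y‖ ≤ ‖g‖ + 2 M`, since `8 ‖g‖ M ≤ (‖g‖ + 2 M)²`, and `max (y ^ ε) (y ^ (-ε)) ≥ 1`.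
-/

lemma le_two_mul_of_forall_le_mul_sq_add_sq_div {u v c : ℝ} (hu : 0 ≤ u) (hv : 0 ≤ v)
    (h : ∀ l > 0, c ≤ l * u ^ 2 + v ^ 2 / l) : c ≤ 2 * u * v := by
  have bound : ∀ η > 0, c ≤ 2 * u * v + η * (u + v) := by
    intro η hη
    -- the optimal `l = v / u`, regularised so that it also works when `u = 0`
    have hu_term : (v + η) / (u + η) * u ^ 2 ≤ (v + η) * u := by
      rw [div_mul_eq_mul_div, div_le_iff₀ (by positivity)]
      nlinarith [mul_nonneg (mul_nonneg hu hη.le) (add_nonneg hv hη.le)]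
    have hv_term : v ^ 2 / ((v + η) / (u + η)) ≤ v * (u + η) := by
      rw [div_div_eq_mul_div, div_le_iff₀ (by positivity)]
      nlinarith [mul_nonneg (mul_nonneg hv hη.le) (add_nonneg hu hη.le)]
    linarith [h _ (by positivity : (0 : ℝ) < (v + η) / (u + η))]
  have hlim : Tendsto (fun η => 2 * u * v + η * (u + v)) (𝓝[>] 0) (𝓝 (2 * u * v)) := by
    refine tendsto_nhdsWithin_of_tendsto_nhds ?_
    simpa using (continuous_const.add (continuous_id.mul continuous_const)).tendsto
      (f := fun η : ℝ => 2 * u * v + η * (u + v)) 0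
  exact ge_of_tendsto hlim (eventually_nhdsWithin_of_forall bound)

lemma one_le_max_rpow_rpow_neg {y : ℝ} (hy : 0 < y) (r : ℝ) : 1 ≤ max (y ^ r) (y ^ (-r)) := by
  by_contra! h
  have hprod : y ^ r * y ^ (-r) = 1 := by rw [← Real.rpow_add hy, add_neg_cancel, Real.rpow_zero]
  nlinarith [max_lt_iff.1 h, Real.rpow_pos_of_pos hy r, Real.rpow_pos_of_pos hy (-r)]

lemma exists_lt_of_integrableOn_div {f : ℝ → ℝ} {a δ : ℝ} (ha : 0 < a) (hδ : 0 < δ)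
    (hf : IntegrableOn (fun t => f t / t) (Ioi a)) : ∃ x > a, f x < δ := by
  by_contra! hfδ
  have hδ_inv : IntegrableOn (fun t => δ * t⁻¹) (Ioi a) := by
    refine hf.mono' ?_ ?_
    · exact (continuousOn_const.mul (continuousOn_inv₀.mono fun t (ht : a < t) =>
        (ha.trans ht).ne')).aestronglyMeasurable measurableSet_Ioi
    · filter_upwards [ae_restrict_mem measurableSet_Ioi] with t (ht : a < t)
      have ht0 : 0 < t := ha.trans ht
      rw [Real.norm_of_nonneg (by positivity), ← div_eq_mul_inv]
      exact div_le_div_of_nonneg_right (hfδ t ht) ht0.le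
  exact not_integrableOn_Ioi_inv ((integrable_const_mul_iff (isUnit_iff_ne_zero.2 hδ.ne') _).1
    hδ_inv)

lemma two_mul_mul_le_mul_sq_div_add {a b l t : ℝ} (hl : 0 < l) (ht : 0 < t) :
    2 * (a * b) ≤ l * (a ^ 2 / t) + (t * b) ^ 2 / t / l := by
  have key : 2 * (a * b) * (t * l) ≤ l ^ 2 * a ^ 2 + t ^ 2 * b ^ 2 := by
    nlinarith [sq_nonneg (l * a - t * b)]
  have h : l * (a ^ 2 / t) + (t * b) ^ 2 / t / l = (l ^ 2 * a ^ 2 + t ^ 2 * b ^ 2) / (t * l) := by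
    field_simp
  rw [h, le_div_iff₀ (by positivity)]
  exact key

theorem norm_sq_le_mul_integral_add_integral_div {F : Type*} [NormedAddCommGroup F]
    [InnerProductSpace ℝ F] {g : ℝ → F} (hg : DifferentiableOn ℝ g (Ioi 0))
    (hA : IntegrableOn (fun t => ‖g t‖ ^ 2 / t) (Ioi 0))
    (hB : IntegrableOn (fun t => ‖t • deriv g t‖ ^ 2 / t) (Ioi 0))
    {y : ℝ} (hy : 0 < y) {l : ℝ} (hl : 0 < l) :
    ‖g y‖ ^ 2 ≤ l * (∫ t in Ioi 0, ‖g t‖ ^ 2 / t) +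
      (∫ t in Ioi 0, ‖t • deriv g t‖ ^ 2 / t) / l := by
  set ψ : ℝ → ℝ := fun t => l * (‖g t‖ ^ 2 / t) + ‖t • deriv g t‖ ^ 2 / t / l
  have hψ : IntegrableOn ψ (Ioi 0) := (hA.const_mul l).add (hB.div_const l)
  have hψ_integral : ∫ t in Ioi 0, ψ t = l * (∫ t in Ioi 0, ‖g t‖ ^ 2 / t) +
      (∫ t in Ioi 0, ‖t • deriv g t‖ ^ 2 / t) / l := by
    rw [integral_add (hA.const_mul l) (hB.div_const l), integral_const_mul, integral_div]
  rw [← hψ_integral]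
  refine le_of_forall_pos_le_add fun δ hδ => ?_
  obtain ⟨x, hyx, hx⟩ := exists_lt_of_integrableOn_div hy hδ (hA.mono_set (Ioi_subset_Ioi hy.le))
  have hIcc : Icc y x ⊆ Ioi 0 := fun t ht => hy.trans_le ht.1
  have hvariation : -‖g x‖ ^ 2 - -‖g y‖ ^ 2 ≤ ∫ t in y..x, ψ t := by
    refine intervalIntegral.sub_le_integral_of_hasDeriv_right_of_le
      (g' := fun t => -(2 * inner ℝ (g t) (deriv g t))) hyx.le
      (((hg.continuousOn.mono hIcc).norm.pow 2).neg) (fun t ht => ?_) (hψ.mono_set hIcc)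
      (fun t ht => ?_)
    · have ht0 : (0 : ℝ) < t := hy.trans ht.1
      exact ((hg.differentiableAt (Ioi_mem_nhds ht0)).hasDerivAt.norm_sq.neg).hasDerivWithinAt
    · have ht0 : (0 : ℝ) < t := hy.trans ht.1
      have hinner : -inner ℝ (g t) (deriv g t) ≤ ‖g t‖ * ‖deriv g t‖ :=
        (neg_le_abs _).trans (abs_real_inner_le_norm _ _)
      have hnorm : ‖t • deriv g t‖ = t * ‖deriv g t‖ := by
        rw [norm_smul, Real.norm_of_nonneg ht0.le]
      have hamgm := two_mul_mul_le_mul_sq_div_add (a := ‖g t‖) (b := ‖deriv g t‖) hl ht0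
      simp only [ψ, hnorm]
      linarith
  have hmono : ∫ t in y..x, ψ t ≤ ∫ t in Ioi 0, ψ t := by
    rw [intervalIntegral.integral_of_le hyx.le]
    have hIoc : Ioc y x ⊆ Ioi 0 := fun t ht => hy.trans ht.1
    refine setIntegral_mono_set hψ ?_ hIoc.eventuallyLE
    filter_upwards [ae_restrict_mem measurableSet_Ioi] with t (ht : 0 < t)
    positivity
  linarith

theorem stmt15_general (ε : ℝ) :
    ∃ C : ℝ, 0 < C ∧
      ∀ g : ℝ → ℂ, ContDiffOn ℝ 1 g (Set.Ioi 0) →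
        IntegrableOn (fun t : ℝ => ‖g t‖ ^ 2 / t) (Set.Ioi 0) →
        IntegrableOn (fun t : ℝ => ‖(t : ℂ) * deriv g t‖ ^ 2 / t) (Set.Ioi 0) →
        ∀ y : ℝ, 0 < y →
          2 * ‖g y‖ ≤
            Real.sqrt (∫ t in Set.Ioi (0 : ℝ), ‖g t‖ ^ 2 / t) +
              C * Real.sqrt (∫ t in Set.Ioi (0 : ℝ), ‖(t : ℂ) * deriv g t‖ ^ 2 / t) *
                max (y ^ ε) (y ^ (-ε)) := by
  refine ⟨2, two_pos, fun g hg hA hB y hy => ?_⟩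
  simp_rw [← Complex.real_smul] at hB ⊢
  set A := ∫ t in Ioi (0 : ℝ), ‖g t‖ ^ 2 / t
  set B := ∫ t in Ioi (0 : ℝ), ‖t • deriv g t‖ ^ 2 / t
  have hA0 : 0 ≤ A := setIntegral_nonneg measurableSet_Ioi fun t (ht : 0 < t) => by positivity
  have hB0 : 0 ≤ B := setIntegral_nonneg measurableSet_Ioi fun t (ht : 0 < t) => by positivity
  have hgy : ‖g y‖ ^ 2 ≤ 2 * √A * √B :=
    le_two_mul_of_forall_le_mul_sq_add_sq_div (Real.sqrt_nonneg A) (Real.sqrt_nonneg B)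
      fun l hl => by
        rw [Real.sq_sqrt hA0, Real.sq_sqrt hB0]
        exact norm_sq_le_mul_integral_add_integral_div (hg.differentiableOn one_ne_zero) hA hB hy hl
  have hsqrt : 2 * ‖g y‖ ≤ √A + 2 * √B := by
    nlinarith [sq_nonneg (√A - 2 * √B), Real.sqrt_nonneg A, Real.sqrt_nonneg B, norm_nonneg (g y)]
  nlinarith [one_le_max_rpow_rpow_neg hy ε, Real.sqrt_nonneg B]

theorem stmt15 (ε : ℝ) (hε0 : 0 < ε) (hε1 : ε < 1) :
    ∃ C : ℝ, 0 < C ∧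
      ∀ g : ℝ → ℂ, ContDiffOn ℝ 1 g (Set.Ioi 0) →
        IntegrableOn (fun t : ℝ => ‖g t‖ ^ 2 / t) (Set.Ioi 0) →
        IntegrableOn (fun t : ℝ => ‖(t : ℂ) * deriv g t‖ ^ 2 / t) (Set.Ioi 0) →
        ∀ y : ℝ, 0 < y →
          2 * ‖g y‖ ≤
            Real.sqrt (∫ t in Set.Ioi (0 : ℝ), ‖g t‖ ^ 2 / t) +
              C * Real.sqrt (∫ t in Set.Ioi (0 : ℝ), ‖(t : ℂ) * deriv g t‖ ^ 2 / t) *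
                max (y ^ ε) (y ^ (-ε)) :=
  stmt15_general ε
end

section
/- Let q > 1 be a real number, let α₁, α₂ ∈ ℂ satisfy |α₁ α₂| = 1 and |α₁| < q^{1/2}, |α₂| < q^{1/2}, and let s ∈ ℂ with Re(s) ≥ 0. For m ≥ 0 set A_m = ∑_{j=0}^{m} α₁^{j} α₂^{m−j}. Then the series ∑_{m=0}^{∞} A_{m+1} · conj(A_m) · q^{−m(s+1)} converges absolutely and ( ∏_{i ∈ {1,2}} ∏_{j ∈ {1,2}} (1 − α_i · conj(α_j) · q^{−(s+1)}) ) · ∑_{m=0}^{∞} A_{m+1} · conj(A_m) · q^{−m(s+1)} = (α₁ + α₂) − α₁ α₂ · conj(α₁ + α₂) · q^{−(s+1)}. -/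
open Complex

/-- The normalized spherical Whittaker value `A_m = ∑_{j=0}^{m} α₁^j α₂^{m-j}`. -/
noncomputable def Asph (α₁ α₂ : ℂ) (m : ℕ) : ℂ :=
  ∑ j ∈ Finset.range (m + 1), α₁ ^ j * α₂ ^ (m - j)

/-!
`A_m` satisfies `A_{m+2} = (α₁ + α₂) A_{m+1} - α₁ α₂ A_m`, and so does its conjugate with the
conjugate parameters. Hence `A_{m+1} conj(A_m)` satisfies a fourth-order linear recurrence whose
characteristic roots are the four products `αᵢ conj(αⱼ)`, and multiplying its generating series
by `∏ (1 - αᵢ conj(αⱼ) t)` leaves a polynomial of degree `< 4` determined by the first four terms;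
it collapses to `(α₁ + α₂) - α₁ α₂ conj(α₁ + α₂) t`. Absolute convergence at
`t = q^{-(s+1)}` comes from `|A_m| ≤ (m + 1) max |αᵢ| ^ m` and `max |αᵢ| ^ 2 < q ≤ |t|⁻¹`.
-/

open Finset

namespace LinearRecurrence

theorem IsSolution.mul_tsum_mul_pow {R : Type*} [CommRing R] [TopologicalSpace R]
    [IsTopologicalRing R] [T2Space R] {E : LinearRecurrence R} {u : ℕ → R}
    (hu : E.IsSolution u) {t : R} (hsum : Summable fun n => u n * t ^ n) :
    (1 - ∑ i, E.coeffs i * t ^ (E.order - i)) * ∑' n, u n * t ^ n =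
      ∑ n ∈ range E.order, u n * t ^ n -
        ∑ i, E.coeffs i * t ^ (E.order - i) * ∑ n ∈ range i, u n * t ^ n := by
  set g : ℕ → R := fun n => u n * t ^ n
  have htail (k : ℕ) : ∑' n, g (n + k) = ∑' n, g n - ∑ n ∈ range k, g n := by
    rw [← hsum.sum_add_tsum_nat_add k]; ring
  have hshift (n : ℕ) :
      g (n + E.order) = ∑ i, E.coeffs i * t ^ (E.order - i) * g (n + i) := by
    simp only [g, hu n, sum_mul]
    refine sum_congr rfl fun i _ => ?_
    rw [show n + E.order = (E.order - i) + (n + i) by omega, pow_add]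
    ring
  have htsum : ∑' n, g (n + E.order) =
      ∑ i, E.coeffs i * t ^ (E.order - i) * ∑' n, g (n + i) := by
    simp_rw [hshift]
    rw [Summable.tsum_finsetSum (f := fun i n => E.coeffs i * t ^ (E.order - i) * g (n + i))
      fun i _ => ((summable_nat_add_iff i).mpr hsum).mul_left _]
    exact sum_congr rfl fun i _ => ((summable_nat_add_iff i).mpr hsum).tsum_mul_left _
  simp only [htail, mul_sub, sum_sub_distrib, ← sum_mul] at htsum
  linear_combination htsum

/-- The recurrence whose characteristic roots are the products `αᵢ βⱼ`, where `α₁, α₂` and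
`β₁, β₂` are the roots of `X² - σX + π` and `X² - σ'X + π'`. -/
def prodOrderTwo {R : Type*} [CommRing R] (σ π σ' π' : R) : LinearRecurrence R :=
  ⟨4, ![-(π ^ 2 * π' ^ 2), π * π' * σ * σ', -(π' * σ ^ 2 + π * σ' ^ 2 - 2 * π * π'), σ * σ']⟩

theorem isSolution_prodOrderTwo {R : Type*} [CommRing R] {σ π σ' π' : R} {u v : ℕ → R}
    (hu : ∀ n, u (n + 2) = σ * u (n + 1) - π * u n)
    (hv : ∀ n, v (n + 2) = σ' * v (n + 1) - π' * v n) :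
    (prodOrderTwo σ π σ' π').IsSolution fun n => u n * v n := by
  intro n
  have hu4 : u (n + 4) = σ * u (n + 3) - π * u (n + 2) := hu (n + 2)
  have hu3 : u (n + 3) = σ * u (n + 2) - π * u (n + 1) := hu (n + 1)
  have hv3 : v (n + 3) = σ' * v (n + 2) - π' * v (n + 1) := hv (n + 1)
  rw [prodOrderTwo]
  simp only [Fin.sum_univ_four, Fin.isValue, Matrix.cons_val_zero, Matrix.cons_val_one,
    Matrix.cons_val, Fin.coe_ofNat_eq_mod, Nat.reduceMod, Nat.zero_mod, Nat.one_mod, Nat.mod_succ,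
    add_zero]
  rw [hu4, hu3, hv (n + 2), hv3, hu n, hv n]
  ring

end LinearRecurrence

theorem Asph_succ (a b : ℂ) (m : ℕ) : Asph a b (m + 1) = a * Asph a b m + b ^ (m + 1) := by
  rw [Asph, sum_range_succ', Asph, mul_sum]
  simp only [pow_succ, Nat.succ_sub_succ, pow_zero, one_mul, Nat.sub_zero]
  congr 1
  exact sum_congr rfl fun j _ => by ring

theorem Asph_add_two (a b : ℂ) (m : ℕ) :
    Asph a b (m + 2) = (a + b) * Asph a b (m + 1) - a * b * Asph a b m := by
  linear_combination Asph_succ a b (m + 1) - b * Asph_succ a b m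

theorem map_Asph (f : ℂ →+* ℂ) (a b : ℂ) (m : ℕ) : f (Asph a b m) = Asph (f a) (f b) m := by
  simp [Asph, map_sum]

theorem mul_tsum_Asph_succ_mul_Asph (a b c d t : ℂ)
    (hsum : Summable fun m => Asph a b (m + 1) * Asph c d m * t ^ m) :
    ((1 - a * c * t) * (1 - a * d * t) * (1 - b * c * t) * (1 - b * d * t)) *
        ∑' m, Asph a b (m + 1) * Asph c d m * t ^ m =
      (a + b) - a * b * (c + d) * t := by
  have hsol := LinearRecurrence.isSolution_prodOrderTwo
    (u := fun m => Asph a b (m + 1)) (fun m => Asph_add_two a b (m + 1))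
    (Asph_add_two c d)
  have hgen := hsol.mul_tsum_mul_pow hsum
  beta_reduce at hgen
  -- abbreviated so that unfolding `Asph` below only touches the four initial terms
  set S := ∑' m, Asph a b (m + 1) * Asph c d m * t ^ m
  rw [LinearRecurrence.prodOrderTwo] at hgen
  simp only [Fin.sum_univ_four, Fin.isValue, Matrix.cons_val_zero, Matrix.cons_val_one,
    Matrix.cons_val, Fin.coe_ofNat_eq_mod, Nat.reduceMod, Nat.zero_mod, Nat.one_mod, Nat.mod_succ,
    Nat.reduceSub, Nat.reduceAdd, Nat.add_one_sub_one, tsub_zero, tsub_self, add_tsub_cancel_left,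
    Asph, sum_range_succ, range_zero, sum_empty, zero_add, pow_zero, pow_one, mul_one, one_mul]
    at hgen
  linear_combination hgen

theorem norm_Asph_le (a b : ℂ) (m : ℕ) : ‖Asph a b m‖ ≤ (m + 1) * max ‖a‖ ‖b‖ ^ m := by
  calc ‖Asph a b m‖ ≤ ∑ j ∈ range (m + 1), ‖a ^ j * b ^ (m - j)‖ := norm_sum_le _ _
    _ ≤ ∑ j ∈ range (m + 1), max ‖a‖ ‖b‖ ^ m := by
      refine sum_le_sum fun j hj => ?_
      rw [norm_mul, norm_pow, norm_pow, ← pow_mul_pow_sub _ (mem_range_succ_iff.mp hj)]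
      gcongr
      exacts [le_max_left _ _, le_max_right _ _]
    _ = (m + 1) * max ‖a‖ ‖b‖ ^ m := by simp

theorem summable_norm_Asph_succ_mul_Asph {a b c d t : ℂ}
    (h : max ‖a‖ ‖b‖ * max ‖c‖ ‖d‖ * ‖t‖ < 1) :
    Summable fun m => ‖Asph a b (m + 1) * Asph c d m * t ^ m‖ := by
  set R := max ‖a‖ ‖b‖
  set x := R * max ‖c‖ ‖d‖ * ‖t‖
  have hx : ‖x‖ < 1 := by rwa [Real.norm_of_nonneg (by positivity)]
  refine .of_nonneg_of_le (fun _ => norm_nonneg _) (fun m => ?_)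
    ((summable_descFactorial_mul_geometric_of_norm_lt_one 2 hx).mul_left R)
  calc ‖Asph a b (m + 1) * Asph c d m * t ^ m‖
      = ‖Asph a b (m + 1)‖ * ‖Asph c d m‖ * ‖t‖ ^ m := by rw [norm_mul, norm_mul, norm_pow]
    _ ≤ ((m + 1 : ℕ) + 1) * R ^ (m + 1) * ((m + 1) * max ‖c‖ ‖d‖ ^ m) * ‖t‖ ^ m := by
      gcongr
      exacts [norm_Asph_le a b (m + 1), norm_Asph_le c d m]
    _ = R * ((m + 2).descFactorial 2 * x ^ m) := by
      simp only [Nat.descFactorial, x]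
      push_cast
      ring

theorem stmt17_general (q : ℝ) (hq : 1 < q) (α₁ α₂ : ℂ)
    (h1 : ‖α₁‖ < Real.sqrt q) (h2 : ‖α₂‖ < Real.sqrt q)
    (s : ℂ) (hs : 0 ≤ s.re) :
    Summable (fun m : ℕ =>
      ‖Asph α₁ α₂ (m + 1) * (starRingEnd ℂ) (Asph α₁ α₂ m) *
        (q : ℂ) ^ (-(m : ℂ) * (s + 1))‖) ∧
    ((1 - α₁ * (starRingEnd ℂ) α₁ * (q : ℂ) ^ (-(s + 1))) *
          (1 - α₁ * (starRingEnd ℂ) α₂ * (q : ℂ) ^ (-(s + 1))) *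
          (1 - α₂ * (starRingEnd ℂ) α₁ * (q : ℂ) ^ (-(s + 1))) *
          (1 - α₂ * (starRingEnd ℂ) α₂ * (q : ℂ) ^ (-(s + 1)))) *
        (∑' m : ℕ, Asph α₁ α₂ (m + 1) * (starRingEnd ℂ) (Asph α₁ α₂ m) *
          (q : ℂ) ^ (-(m : ℂ) * (s + 1)))
      = (α₁ + α₂) - α₁ * α₂ * (starRingEnd ℂ) (α₁ + α₂) * (q : ℂ) ^ (-(s + 1)) := by
  have hq0 : 0 < q := by linarith
  set t := (q : ℂ) ^ (-(s + 1))
  have hpow (m : ℕ) : (q : ℂ) ^ (-(m : ℂ) * (s + 1)) = t ^ m := by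
    rw [← cpow_nat_mul]
    ring_nf
  have ht : ‖t‖ ≤ q⁻¹ := by
    rw [norm_cpow_eq_rpow_re_of_pos hq0, ← Real.rpow_neg_one]
    exact Real.rpow_le_rpow_of_exponent_le hq.le (by simp; linarith)
  have hR : max ‖α₁‖ ‖α₂‖ ^ 2 < q := by
    rw [← Real.lt_sqrt (by positivity)]
    exact max_lt h1 h2
  have hconv : max ‖α₁‖ ‖α₂‖ * max ‖starRingEnd ℂ α₁‖ ‖starRingEnd ℂ α₂‖ * ‖t‖ < 1 := by
    rw [norm_conj, norm_conj, ← sq]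
    calc max ‖α₁‖ ‖α₂‖ ^ 2 * ‖t‖ ≤ max ‖α₁‖ ‖α₂‖ ^ 2 * q⁻¹ := by gcongr
      _ < 1 := by rwa [← div_eq_mul_inv, div_lt_one hq0]
  have hsum := summable_norm_Asph_succ_mul_Asph hconv
  simp_rw [hpow, map_Asph]
  refine ⟨hsum, ?_⟩
  rw [mul_tsum_Asph_succ_mul_Asph _ _ _ _ _ hsum.of_norm, map_add]

theorem stmt17 (q : ℝ) (hq : 1 < q) (α₁ α₂ : ℂ)
    (hmul : ‖α₁ * α₂‖ = 1)
    (h1 : ‖α₁‖ < Real.sqrt q) (h2 : ‖α₂‖ < Real.sqrt q)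
    (s : ℂ) (hs : 0 ≤ s.re) :
    Summable (fun m : ℕ =>
      ‖Asph α₁ α₂ (m + 1) * (starRingEnd ℂ) (Asph α₁ α₂ m) *
        (q : ℂ) ^ (-(m : ℂ) * (s + 1))‖) ∧
    ((1 - α₁ * (starRingEnd ℂ) α₁ * (q : ℂ) ^ (-(s + 1))) *
          (1 - α₁ * (starRingEnd ℂ) α₂ * (q : ℂ) ^ (-(s + 1))) *
          (1 - α₂ * (starRingEnd ℂ) α₁ * (q : ℂ) ^ (-(s + 1))) *
          (1 - α₂ * (starRingEnd ℂ) α₂ * (q : ℂ) ^ (-(s + 1)))) *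
        (∑' m : ℕ, Asph α₁ α₂ (m + 1) * (starRingEnd ℂ) (Asph α₁ α₂ m) *
          (q : ℂ) ^ (-(m : ℂ) * (s + 1)))
      = (α₁ + α₂) - α₁ * α₂ * (starRingEnd ℂ) (α₁ + α₂) * (q : ℂ) ^ (-(s + 1)) :=
  stmt17_general q hq α₁ α₂ h1 h2 s hs
end

section
/- Let n ≥ 1 be an integer and let h₀ : ℝ → ℂ be n times continuously differentiable, supported in (0, 2], and constant on (0, 1]. Let 0 < A ≤ B and set h(t) = h₀(t/B) − h₀(t/A) for t > 0. Then for every s ∈ ℂ with Re(s) ≥ 0: | ∫_{0}^{∞} h(t) t^{s−1} dt | ≤ log(B/A) · (sup_{t ∈ [1,2]} |h₀^{(n)}(t)|) · B^{Re(s)} · ( ∫_{1}^{2} t^{Re(s)+n−1} dt ) / ∏_{j=1}^{n−1} |s + j| (for n = 1 the empty product equals 1). -/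
/-!
Since `h₀` is continuous, its constant value on `(0, 1]` is `h₀ 0 = 0`. So `h₀` vanishes off
`[1, 2]`, and its derivatives up to order `n`, having open supports inside `[1, 2]`, vanish off
`(1, 2)`. Hence the Mellin transform
of `h₀` is an integral over `[1, 2]`, and by dilation that of `h` is `(B^s - A^s) · 𝓜h₀(s)`.
Integrating by parts `n` times gives `s (s + 1) ⋯ (s + n - 1) · 𝓜h₀(s) = ± 𝓜h₀⁽ⁿ⁾(s + n)`,
which is bounded by `sup |h₀⁽ⁿ⁾| · ∫₁² t^(Re s + n - 1) dt`. Finally, the mean value theorem for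
`x ↦ exp (x s)` on `[log A, log B]` gives `|B^s - A^s| ≤ |s| log(B/A) B^(Re s)`, and the factor
`|s|` cancels the first factor of the product.
-/

open MeasureTheory Complex Set Function

section Support

variable {E : Type*} [NormedAddCommGroup E]

theorem support_subset_Ioc_of_eqOn_Ioc {f : ℝ → E} (hf : Continuous f) {a b : ℝ} (ha : 0 < a)
    (hsupp : ∀ t, t ∉ Ioc 0 b → f t = 0) (hconst : ∃ c, ∀ t ∈ Ioc 0 a, f t = c) :
    support f ⊆ Ioc a b := by
  obtain ⟨c, hc⟩ := hconst
  have hc0 : f 0 = c :=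
    EqOn.of_subset_closure hc hf.continuousOn continuousOn_const Ioc_subset_Icc_self
      (by rw [closure_Ioc ha.ne]) ⟨le_rfl, ha.le⟩
  intro t ht
  by_contra hmem
  refine ht ?_
  by_cases htb : t ∈ Ioc 0 b
  · rw [hc t ⟨htb.1, not_lt.1 fun h => hmem ⟨h, htb.2⟩⟩, ← hc0, hsupp 0 (by simp)]
  · exact hsupp t htb

variable [NormedSpace ℝ E]

theorem support_iteratedDeriv_subset_tsupport (k : ℕ) (f : ℝ → E) :
    support (iteratedDeriv k f) ⊆ tsupport f := fun x hx =>
  support_iteratedFDeriv_subset (𝕜 := ℝ) k <| mem_support.2 fun h =>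
    hx (by rw [iteratedDeriv_eq_iteratedFDeriv, h]; rfl)

theorem support_iteratedDeriv_subset_Ioo {n k : ℕ} {f : ℝ → E} (hf : ContDiff ℝ (n : ℕ∞) f)
    (hk : k ≤ n) {a b : ℝ} (hsupp : support f ⊆ Icc a b) :
    support (iteratedDeriv k f) ⊆ Ioo a b := by
  rw [← interior_Icc]
  refine interior_maximal ?_ (isOpen_compl_singleton.preimage
    (hf.continuous_iteratedDeriv k (by exact_mod_cast hk)))
  exact (support_iteratedDeriv_subset_tsupport k f).trans (closure_minimal hsupp isClosed_Icc)

end Support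

theorem norm_le_iSup_norm_Icc {E : Type*} [NormedAddCommGroup E] {g : ℝ → E} {a b : ℝ}
    (hg : ContinuousOn g (Icc a b)) {x : ℝ} (hx : x ∈ Icc a b) :
    ‖g x‖ ≤ ⨆ t : Icc a b, ‖g t‖ := by
  have hbdd := isCompact_Icc.bddAbove_image hg.norm
  rw [image_eq_range] at hbdd
  exact le_ciSup hbdd ⟨x, hx⟩

section Powers

theorem hasDerivAt_ofReal_cpow_const_of_pos {x : ℝ} (hx : 0 < x) (w : ℂ) :
    HasDerivAt (fun y : ℝ => (y : ℂ) ^ w) (w * (x : ℂ) ^ (w - 1)) x := by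
  simpa using ((hasDerivAt_id (x : ℂ)).cpow_const (ofReal_mem_slitPlane.2 hx)).comp_ofReal

theorem continuousOn_ofReal_cpow_const_Icc {a b : ℝ} (ha : 0 < a) (w : ℂ) :
    ContinuousOn (fun x : ℝ => (x : ℂ) ^ w) (Icc a b) := fun _ hx =>
  (continuousAt_ofReal_cpow_const _ _ (Or.inr (ha.trans_le hx.1).ne')).continuousWithinAt

theorem norm_cpow_sub_cpow_le {a b : ℝ} (ha : 0 < a) (hab : a ≤ b) {s : ℂ} (hs : 0 ≤ s.re) :
    ‖(b : ℂ) ^ s - (a : ℂ) ^ s‖ ≤ ‖s‖ * Real.log (b / a) * b ^ s.re := by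
  have hb : 0 < b := ha.trans_le hab
  have hpow {c : ℝ} (hc : 0 < c) : (c : ℂ) ^ s = cexp (Real.log c * s) := by
    rw [cpow_def_of_ne_zero (ofReal_ne_zero.2 hc.ne'), ofReal_log hc.le]
  have hderiv (x : ℝ) : HasDerivAt (fun x : ℝ => cexp (x * s)) (cexp (x * s) * s) x := by
    simpa using ((hasDerivAt_id (x : ℂ)).mul_const s).cexp.comp_ofReal
  have hbound : ∀ x ∈ Ico (Real.log a) (Real.log b), ‖cexp (x * s) * s‖ ≤ ‖s‖ * b ^ s.re := by
    intro x hx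
    rw [norm_mul, norm_exp, mul_comm, re_ofReal_mul, Real.rpow_def_of_pos hb]
    gcongr
    exact hx.2.le
  have := norm_image_sub_le_of_norm_deriv_le_segment' (fun x _ => (hderiv x).hasDerivWithinAt)
    hbound (Real.log b) ⟨Real.log_le_log ha hab, le_rfl⟩
  rw [hpow ha, hpow hb, Real.log_div hb.ne' ha.ne']
  linarith

theorem prod_range_norm_add_natCast (s : ℂ) {n : ℕ} (hn : 1 ≤ n) :
    ∏ j ∈ Finset.range n, ‖s + j‖ = ‖s‖ * ∏ j ∈ Finset.Icc 1 (n - 1), ‖s + j‖ := by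
  rw [Finset.prod_range_eq_mul_Ico _ hn, Finset.Icc_sub_one_right_eq_Ico_of_not_isMin
    (by simpa using Nat.one_le_iff_ne_zero.1 hn), Nat.cast_zero, add_zero]

theorem prod_Icc_norm_add_natCast_pos {s : ℂ} (hs : 0 ≤ s.re) (n : ℕ) :
    0 < ∏ j ∈ Finset.Icc 1 n, ‖s + j‖ :=
  Finset.prod_pos fun j hj => by
    have hj : (1 : ℝ) ≤ j := by exact_mod_cast (Finset.mem_Icc.1 hj).1
    have := re_le_norm (s + j)
    simp only [add_re, natCast_re] at this
    linarith

end Powers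

section Mellin

variable {E : Type*} [NormedAddCommGroup E] [NormedSpace ℂ E]

theorem mellinConvergent_of_support_subset_Icc {f : ℝ → E} {a b : ℝ} (ha : 0 < a)
    (hf : ContinuousOn f (Icc a b)) (hsupp : support f ⊆ Icc a b) (s : ℂ) :
    MellinConvergent f s := by
  refine ((continuousOn_ofReal_cpow_const_Icc ha (s - 1)).smul hf).integrableOn_Icc
    |>.of_forall_sdiff_eq_zero measurableSet_Ioi fun t ht => ?_
  change (t : ℂ) ^ (s - 1) • f t = 0
  rw [notMem_support.1 fun h => ht.2 (hsupp h), smul_zero]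

theorem mellin_eq_intervalIntegral_of_support_subset_Icc {f : ℝ → E} {a b : ℝ} (ha : 0 < a)
    (hab : a ≤ b) (hsupp : support f ⊆ Icc a b) (s : ℂ) :
    mellin f s = ∫ t in a..b, (t : ℂ) ^ (s - 1) • f t := by
  rw [mellin, intervalIntegral.integral_of_le hab, ← integral_Icc_eq_integral_Ioc]
  refine setIntegral_eq_of_subset_of_forall_sdiff_eq_zero measurableSet_Ioi
    (fun t ht => ha.trans_le ht.1) fun t ht => ?_
  rw [notMem_support.1 fun h => ht.2 (hsupp h), smul_zero]

theorem mellin_comp_div (f : ℝ → E) (s : ℂ) {a : ℝ} (ha : 0 < a) :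
    mellin (fun t => f (t / a)) s = (a : ℂ) ^ s • mellin f s := by
  simp_rw [div_eq_mul_inv]
  rw [mellin_comp_mul_right f s (inv_pos.2 ha), ofReal_inv,
    inv_cpow _ _ (by rw [arg_ofReal_of_nonneg ha.le]; exact Real.pi_ne_zero.symm), cpow_neg,
    inv_inv]

theorem mellin_comp_div_sub_comp_div {f : ℝ → E} {s : ℂ} (hf : MellinConvergent f s) {a b : ℝ}
    (ha : 0 < a) (hb : 0 < b) :
    mellin (fun t => f (t / b) - f (t / a)) s = ((b : ℂ) ^ s - (a : ℂ) ^ s) • mellin f s := by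
  have hconv {c : ℝ} (hc : 0 < c) : MellinConvergent (fun t => f (t / c)) s := by
    simpa only [div_eq_inv_mul] using (MellinConvergent.comp_mul_left (inv_pos.2 hc)).2 hf
  rw [(hasMellin_sub (hconv hb) (hconv ha)).2, mellin_comp_div f s hb, mellin_comp_div f s ha,
    sub_smul]

theorem norm_integral_cpow_smul_le {g : ℝ → E} {a b M : ℝ} (ha : 0 < a) (hab : a ≤ b)
    (hg : ∀ x ∈ Icc a b, ‖g x‖ ≤ M) (w : ℂ) :
    ‖∫ x in a..b, (x : ℂ) ^ w • g x‖ ≤ M * ∫ x in a..b, x ^ w.re := by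
  rw [← intervalIntegral.integral_const_mul]
  refine intervalIntegral.norm_integral_le_of_norm_le hab (ae_of_all _ fun x hx => ?_)
    ((intervalIntegral.intervalIntegrable_rpow (Or.inr ?_)).const_mul M)
  · rw [norm_smul, norm_cpow_eq_rpow_re_of_pos (ha.trans hx.1), mul_comm M]
    exact mul_le_mul_of_nonneg_left (hg x (Ioc_subset_Icc_self hx))
      (Real.rpow_nonneg (ha.trans hx.1).le _)
  · rw [uIcc_of_le hab]
    exact fun h => (ha.trans_le h.1).false

variable [CompleteSpace E]

theorem integral_cpow_smul_deriv_eq {f f' : ℝ → E} {a b : ℝ} (ha : 0 < a) (hab : a ≤ b)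
    (hf : ∀ x ∈ Icc a b, HasDerivAt f (f' x) x) (hf' : IntervalIntegrable f' volume a b)
    (hfa : f a = 0) (hfb : f b = 0) (w : ℂ) :
    ∫ x in a..b, (x : ℂ) ^ w • f' x = -(w • ∫ x in a..b, (x : ℂ) ^ (w - 1) • f x) := by
  have hpow : ∀ x ∈ Icc a b, HasDerivAt (fun y : ℝ => (y : ℂ) ^ w) (w * (x : ℂ) ^ (w - 1)) x :=
    fun x hx => hasDerivAt_ofReal_cpow_const_of_pos (ha.trans_le hx.1) w
  have hpow' : IntervalIntegrable (fun x : ℝ => w * (x : ℂ) ^ (w - 1)) volume a b :=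
    ((continuousOn_ofReal_cpow_const_Icc ha _).const_smul w).intervalIntegrable_of_Icc hab
  rw [intervalIntegral.integral_smul_deriv_eq_deriv_smul (by rwa [uIcc_of_le hab])
    (by rwa [uIcc_of_le hab]) hpow' hf', hfa, hfb, smul_zero, smul_zero, sub_zero, zero_sub,
    ← intervalIntegral.integral_smul]
  simp only [mul_smul]

theorem prod_smul_integral_cpow_smul_eq {n : ℕ} {f : ℝ → E} (hf : ContDiff ℝ (n : ℕ∞) f)
    {a b : ℝ} (ha : 0 < a) (hab : a ≤ b)
    (hvanish : ∀ k < n, iteratedDeriv k f a = 0 ∧ iteratedDeriv k f b = 0) (s : ℂ) :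
    (∏ j ∈ Finset.range n, (s + j)) • ∫ x in a..b, (x : ℂ) ^ (s - 1) • f x
      = (-1) ^ n • ∫ x in a..b, (x : ℂ) ^ (s - 1 + n) • iteratedDeriv n f x := by
  induction n with
  | zero => simp
  | succ n ih =>
    have hstep := integral_cpow_smul_deriv_eq (w := s - 1 + (n + 1 : ℕ)) ha hab
      (f' := iteratedDeriv (n + 1) f) (fun x _ => by
        rw [iteratedDeriv_succ]
        exact (hf.differentiable_iteratedDeriv n (by exact_mod_cast n.lt_succ_self) x).hasDerivAt)
      ((hf.continuous_iteratedDeriv (n + 1) le_rfl).intervalIntegrable a b)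
      (hvanish n n.lt_succ_self).1 (hvanish n n.lt_succ_self).2
    rw [show s - 1 + ((n + 1 : ℕ) : ℂ) - 1 = s - 1 + n by push_cast; ring] at hstep
    rw [Finset.prod_range_succ, mul_comm, mul_smul, ih (hf.of_le (by exact_mod_cast n.le_succ))
      fun k hk => hvanish k (hk.trans n.lt_succ_self), hstep, pow_succ, mul_smul, smul_comm,
      neg_one_smul, neg_neg]
    congr 2
    push_cast
    ring

end Mellin

theorem stmt19 (n : ℕ) (hn : 1 ≤ n) (h₀ : ℝ → ℂ) (hCD : ContDiff ℝ (n : ℕ∞) h₀)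
    (hsupp : ∀ t : ℝ, t ∉ Set.Ioc (0 : ℝ) 2 → h₀ t = 0)
    (hconst : ∃ c : ℂ, ∀ t ∈ Set.Ioc (0 : ℝ) 1, h₀ t = c)
    (A B : ℝ) (hA : 0 < A) (hAB : A ≤ B) (s : ℂ) (hs : 0 ≤ s.re) :
    ‖∫ t in Set.Ioi (0 : ℝ), (h₀ (t / B) - h₀ (t / A)) * (t : ℂ) ^ (s - 1)‖
      ≤ Real.log (B / A) * (⨆ t : Set.Icc (1 : ℝ) 2, ‖iteratedDeriv n h₀ t‖) *
          B ^ s.re * (∫ t in (1 : ℝ)..2, t ^ (s.re + n - 1)) /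
          ∏ j ∈ Finset.Icc 1 (n - 1), ‖s + (j : ℂ)‖ := by
  have hsupp₀ : support h₀ ⊆ Icc 1 2 :=
    (support_subset_Ioc_of_eqOn_Ioc hCD.continuous one_pos hsupp hconst).trans Ioc_subset_Icc_self
  have hvanish : ∀ k < n, iteratedDeriv k h₀ 1 = 0 ∧ iteratedDeriv k h₀ 2 = 0 := fun k hk =>
    have hsub := support_iteratedDeriv_subset_Ioo hCD hk.le hsupp₀
    ⟨notMem_support.1 fun h => (hsub h).1.false, notMem_support.1 fun h => (hsub h).2.false⟩
  have hmellin : ∫ t in Ioi (0 : ℝ), (h₀ (t / B) - h₀ (t / A)) * (t : ℂ) ^ (s - 1)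
      = ((B : ℂ) ^ s - (A : ℂ) ^ s) * ∫ x in (1 : ℝ)..2, (x : ℂ) ^ (s - 1) • h₀ x := by
    rw [← smul_eq_mul, ← mellin_eq_intervalIntegral_of_support_subset_Icc one_pos one_le_two
      hsupp₀, ← mellin_comp_div_sub_comp_div (mellinConvergent_of_support_subset_Icc one_pos
      hCD.continuous.continuousOn hsupp₀ s) hA (hA.trans_le hAB)]
    simp_rw [mellin, smul_eq_mul, mul_comm]
  set J := ∫ x in (1 : ℝ)..2, (x : ℂ) ^ (s - 1) • h₀ x
  set P := ∏ j ∈ Finset.Icc 1 (n - 1), ‖s + (j : ℂ)‖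
  set M := ⨆ t : Icc (1 : ℝ) 2, ‖iteratedDeriv n h₀ t‖
  have hibp : ‖s‖ * P * ‖J‖
      = ‖∫ x in (1 : ℝ)..2, (x : ℂ) ^ (s - 1 + n) • iteratedDeriv n h₀ x‖ := by
    have := congrArg norm (prod_smul_integral_cpow_smul_eq hCD one_pos one_le_two hvanish s)
    rwa [norm_smul, norm_smul, norm_pow, norm_neg, norm_one, one_pow, one_mul, norm_prod,
      prod_range_norm_add_natCast s hn] at this
  have hM := norm_integral_cpow_smul_le one_pos one_le_two (fun x hx => norm_le_iSup_norm_Icc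
    (hCD.continuous_iteratedDeriv n le_rfl).continuousOn hx) (s - 1 + n)
  have hre : (s - 1 + n).re = s.re + n - 1 := by
    simp only [add_re, sub_re, one_re, natCast_re]
    ring
  calc _ = ‖(B : ℂ) ^ s - (A : ℂ) ^ s‖ * ‖J‖ := by rw [hmellin, norm_mul]
    _ ≤ ‖s‖ * Real.log (B / A) * B ^ s.re * ‖J‖ := by
      gcongr
      exact norm_cpow_sub_cpow_le hA hAB hs
    _ = Real.log (B / A) * B ^ s.re * (‖s‖ * P * ‖J‖) / P := by
      rw [eq_div_iff (prod_Icc_norm_add_natCast_pos hs (n - 1)).ne']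
      ring
    _ ≤ Real.log (B / A) * B ^ s.re * (M * ∫ x in (1 : ℝ)..2, x ^ (s - 1 + n).re) / P := by
      rw [hibp]
      gcongr
      exact mul_nonneg (Real.log_nonneg ((one_le_div hA).2 hAB))
        (Real.rpow_nonneg (hA.le.trans hAB) _)
    _ = _ := by rw [hre]; ring
end
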